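/- arXiv:1712.09186 — 11 statements merged into one kernel-verified Lean document; each statement's English description precedes it below -/
import Mathlib

section
/- Let R be a von Neumann regular ring, let I be a two-sided ideal of R, and let H be an additive subgroup of I that is a two-sided ideal of the ring I (i.e., I·H ⊆ H and H·I ⊆ H). Then H is a two-sided ideal of R, i.e., R·H ⊆ H and H·R ⊆ H. -/
/-- If `I` is a two-sided ideal of a von Neumann regular ring `R`, then any
two-sided ideal `H` of the ring `I` is a two-sided ideal of `R`. -/
theorem ideal_of_ideal_of_vonNeumannRegular {R : Type*} [NonUnitalRing R]
    (hreg : ∀ a : R, ∃ x : R, a * x * a = a)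
    (I H : AddSubgroup R)
    (hIl : ∀ (r : R), ∀ x ∈ I, r * x ∈ I)
    (hIr : ∀ (r : R), ∀ x ∈ I, x * r ∈ I)
    (hHI : (H : Set R) ⊆ (I : Set R))
    (hHl : ∀ i ∈ I, ∀ h ∈ H, i * h ∈ H)
    (hHr : ∀ i ∈ I, ∀ h ∈ H, h * i ∈ H) :
    (∀ (r : R), ∀ h ∈ H, r * h ∈ H) ∧ (∀ (r : R), ∀ h ∈ H, h * r ∈ H) := by
  constructor
  · intro r h hh
    obtain ⟨x, hx⟩ := hreg h
    have hhI : h ∈ I := hHI hh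
    have : r * h = (r * (h * x)) * h := by
      conv_lhs => rw [← hx]
      noncomm_ring
    rw [this]
    exact hHl _ (hIl r _ (hIr x h hhI)) h hh
  · intro r h hh
    obtain ⟨x, hx⟩ := hreg h
    have hhI : h ∈ I := hHI hh
    have : h * r = h * ((x * h) * r) := by
      conv_lhs => rw [← hx]
      noncomm_ring
    rw [this]
    exact hHr _ (hIr r _ (hIl x h hhI)) h hh
end

section
/- The ideal I of endomorphisms with finite image is a locally finite ring: for every finite subset S of I there exists a finite (nonunital) subring B of End(A) with B ⊆ I and S ⊆ B. -/
/-!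
Let `V` be the span of the images of the maps in `S` and `W` their common kernel. Over a finite
ring `V` is finite and `M ⧸ W` embeds into the product of the (finite) images, so it is finite too.
The endomorphisms `f` with `range f ≤ V` and `W ≤ ker f` form a subring containing `S`, and each
of them factors as a map `M ⧸ W → V` between finite sets, so this subring is finite.
-/

namespace Module.End

variable {R M : Type*} [Ring R] [AddCommGroup M] [Module R M]

def rangeKerSubring (V W : Submodule R M) : NonUnitalSubring (Module.End R M) where
  carrier := {f | LinearMap.range f ≤ V ∧ W ≤ LinearMap.ker f}
  add_mem' hf hg :=
    ⟨(LinearMap.range_add_le _ _).trans (sup_le hf.1 hg.1),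
      fun x hx => by simp [LinearMap.mem_ker.mp (hf.2 hx), LinearMap.mem_ker.mp (hg.2 hx)]⟩
  zero_mem' := ⟨by simp, by simp⟩
  neg_mem' hf := ⟨by simpa using hf.1, by simpa using hf.2⟩
  mul_mem' hf hg :=
    ⟨(LinearMap.range_comp_le_range _ _).trans hf.1, hg.2.trans (LinearMap.ker_le_ker_comp _ _)⟩

theorem mem_rangeKerSubring {V W : Submodule R M} {f : Module.End R M} :
    f ∈ rangeKerSubring V W ↔ LinearMap.range f ≤ V ∧ W ≤ LinearMap.ker f :=
  Iff.rfl

theorem finite_rangeKerSubring {V W : Submodule R M} (hV : (V : Set M).Finite)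
    [Finite (M ⧸ W)] : (rangeKerSubring V W : Set (Module.End R M)).Finite := by
  have : Finite V := hV.to_subtype
  let factor (f : rangeKerSubring V W) : M ⧸ W → V := fun q =>
    ⟨W.liftQ f.1 (mem_rangeKerSubring.mp f.2).2 q,
      (mem_rangeKerSubring.mp f.2).1 ((W.range_liftQ _ _).le (LinearMap.mem_range_self _ q))⟩
  refine Set.finite_coe_iff.mp (_root_.Finite.of_injective factor fun f g hfg => ?_)
  ext m
  simpa [factor] using congrArg Subtype.val (congrFun hfg (W.mkQ m))

end Module.End

theorem Submodule.finite_span_of_finite {R M : Type*} [Ring R] [Finite R] [AddCommGroup M]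
    [Module R M] {s : Set M} (hs : s.Finite) : (Submodule.span R s : Set M).Finite := by
  have : Module.Finite R (Submodule.span R s) := Module.Finite.span_of_finite R hs
  have : Finite (Submodule.span R s) := Module.finite_of_finite R
  exact Set.toFinite _

theorem LinearMap.finite_quotient_ker_pi {R M ι : Type*} {N : ι → Type*} [Ring R] [AddCommGroup M]
    [Module R M] [∀ i, AddCommGroup (N i)] [∀ i, Module R (N i)] [Finite ι]
    (f : (i : ι) → M →ₗ[R] N i) (hf : ∀ i, (Set.range (f i)).Finite) :
    Finite (M ⧸ LinearMap.ker (LinearMap.pi f)) := by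
  have hrange : Set.range (LinearMap.pi f) ⊆ Set.univ.pi fun i => Set.range (f i) := by
    rintro _ ⟨m, rfl⟩ i -
    exact ⟨m, rfl⟩
  have : Finite (LinearMap.range (LinearMap.pi f)) :=
    ((Set.Finite.pi hf).subset hrange).to_subtype
  exact Finite.of_equiv _ (LinearMap.quotKerEquivRange _).symm.toEquiv

open Module.End in
/-- The ideal of finite-image endomorphisms of the countable elementary abelian
`p`-group `ℕ →₀ ZMod p` is a locally finite ring: every finite set of finite-image
endomorphisms is contained in a finite (nonunital) subring consisting of
finite-image endomorphisms. -/
theorem finRange_locally_finite (p : ℕ) [Fact p.Prime]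
    (S : Finset (Module.End (ZMod p) (ℕ →₀ ZMod p)))
    (hS : ∀ α ∈ S, (Set.range α).Finite) :
    ∃ B : NonUnitalSubring (Module.End (ZMod p) (ℕ →₀ ZMod p)),
      (B : Set (Module.End (ZMod p) (ℕ →₀ ZMod p))).Finite ∧
      (∀ β ∈ B, (Set.range β).Finite) ∧
      ∀ α ∈ S, α ∈ B := by
  let V := Submodule.span (ZMod p) (⋃ α ∈ S, Set.range α)
  let W := LinearMap.ker (LinearMap.pi fun α : S => (α : Module.End (ZMod p) (ℕ →₀ ZMod p)))
  have hV : (V : Set (ℕ →₀ ZMod p)).Finite :=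
    Submodule.finite_span_of_finite (S.finite_toSet.biUnion hS)
  have : Finite ((ℕ →₀ ZMod p) ⧸ W) := LinearMap.finite_quotient_ker_pi _ fun α => hS α α.2
  refine ⟨rangeKerSubring V W, finite_rangeKerSubring hV, fun β hβ => ?_, fun α hα => ?_⟩
  · rw [← LinearMap.coe_range]
    exact hV.subset (mem_rangeKerSubring.mp hβ).1
  · refine mem_rangeKerSubring.mpr ⟨?_, ?_⟩
    · rintro _ ⟨m, rfl⟩
      exact Submodule.subset_span (Set.mem_biUnion hα (Set.mem_range_self m))
    · exact (LinearMap.ker_pi _).trans_le (iInf_le _ (⟨α, hα⟩ : S))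
end

section
/- Let A be a Hausdorff topological ring (not necessarily with identity) that is locally compact, totally disconnected, and compactly generated, i.e., A is generated as a ring by some compact subset. If A contains a dense (nonunital) subring B that is locally finite as a ring (every finite subset of B is contained in a finite subring of B), then A is compact. -/
/-!
By van Dantzig, `A` has a compact open subring `W`, and since `B` is dense, a compact generating
set `K` lies in `F + W` for a finite `F ⊆ B`. Let `C₀` be the finite subring generated by `F` and
`V ⊆ W` the open subring of those `x` with `C₀¹ x C₀¹ ⊆ W`; then `W` is covered by finitely many
cosets `e + V` with `e ∈ B ∩ W`. For the finite subring `C₁` generated by `F` and these `e`, the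
set `C₁ + V` is a subring: the generators from `F` multiply `V` into `V`, and the `e` multiply
it into `W ⊆ C₁ + V`. Being compact and containing `K`, it is all of `A`.
-/

open Set Filter Topology Pointwise

theorem isOpen_setOf_mapsTo_of_continuous_uncurry {X Y Z : Type*} [TopologicalSpace X]
    [TopologicalSpace Y] [TopologicalSpace Z] {f : X → Y → Z}
    (hf : Continuous (Function.uncurry f)) {K : Set Y} (hK : IsCompact K) {U : Set Z}
    (hU : IsOpen U) : IsOpen {x | MapsTo (f x) K U} :=
  (ContinuousMap.isOpen_setOfPred_mapsTo hK hU).preimage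
    (ContinuousMap.curry ⟨_, hf⟩).continuous

section AddGroup

variable {G : Type*} [AddGroup G] [TopologicalSpace G] [IsTopologicalAddGroup G]

theorem IsCompact.isOpen_addStabilizer {V : Set G} (hVc : IsCompact V) (hVo : IsOpen V) :
    IsOpen (AddAction.stabilizer G V : Set G) := by
  refine AddSubgroup.isOpen_of_mem_nhds _ (g := 0) ?_
  have hP : IsOpen {g : G | MapsTo (g + ·) V V} :=
    isOpen_setOf_mapsTo_of_continuous_uncurry continuous_add hVc hVo
  have h0 : (0 : G) ∈ {g : G | MapsTo (g + ·) V V} := fun v hv => by simpa using hv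
  filter_upwards [hP.mem_nhds h0, neg_mem_nhds_zero G (hP.mem_nhds h0)] with g hg hg'
  refine AddAction.mem_stabilizer_set.2 fun v => ⟨fun hgv => ?_, fun hv => hg hv⟩
  simpa using hg' hgv

theorem exists_isCompact_isOpen_addSubgroup [T2Space G] [LocallyCompactSpace G]
    [TotallyDisconnectedSpace G] :
    ∃ H : AddSubgroup G, IsCompact (H : Set G) ∧ IsOpen (H : Set G) := by
  obtain ⟨Q, hQc, hQ⟩ := exists_compact_mem_nhds (0 : G)
  obtain ⟨V, ⟨hVcl, hVo⟩, hV0, hVQ⟩ :=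
    loc_compact_Haus_tot_disc_of_zero_dim.mem_nhds_iff.1 hQ
  have hVc : IsCompact V := hQc.of_isClosed_subset hVcl hVQ
  have hstab_le : (AddAction.stabilizer G V : Set G) ⊆ V := fun g hg => by
    simpa using (AddAction.mem_stabilizer_set.1 hg 0).2 hV0
  have ho := hVc.isOpen_addStabilizer hVo
  exact ⟨_, hVc.of_isClosed_subset (AddSubgroup.isClosed_of_isOpen _ ho) hstab_le, ho⟩

theorem IsCompact.exists_finite_subset_add {K D V : Set G} (hK : IsCompact K)
    (hKD : K ⊆ closure D) (hV : IsOpen V) (hV0 : (0 : G) ∈ V) :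
    ∃ F ⊆ D, F.Finite ∧ K ⊆ F + V := by
  have hcover : K ⊆ ⋃ d ∈ D, d +ᵥ V := fun k hk => by
    obtain ⟨d, hdk, hd⟩ := mem_closure_iff.1 (hKD hk) {d | -d + k ∈ V}
      (hV.preimage (by fun_prop)) (by simpa using hV0)
    exact mem_biUnion hd (mem_vadd_set_iff_neg_vadd_mem.2 hdk)
  obtain ⟨F, hFD, hF, hKF⟩ := hK.elim_finite_subcover_image (fun d _ => hV.vadd d) hcover
  exact ⟨F, hFD, hF, hKF.trans (iUnion_vadd_set F V).le⟩

end AddGroup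

section NonUnitalRing

variable {A : Type*} [NonUnitalRing A]

theorem AddSubgroup.exists_isOpen_nonUnitalSubring_le [TopologicalSpace A]
    [IsTopologicalRing A] (U : AddSubgroup A) (hUc : IsCompact (U : Set A))
    (hUo : IsOpen (U : Set A)) :
    ∃ W : NonUnitalSubring A, IsOpen (W : Set A) ∧ (W : Set A) ⊆ U := by
  let W : NonUnitalSubring A :=
    { carrier := U ∩ {x | MapsTo (x * ·) U U}
      zero_mem' := ⟨U.zero_mem, fun u _ => by simp⟩
      add_mem' := fun ⟨hx, hxU⟩ ⟨hy, hyU⟩ =>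
        ⟨U.add_mem hx hy, fun u hu => by simpa [add_mul] using U.add_mem (hxU hu) (hyU hu)⟩
      neg_mem' := fun ⟨hx, hxU⟩ =>
        ⟨U.neg_mem hx, fun u hu => by simpa using U.neg_mem (hxU hu)⟩
      mul_mem' := fun ⟨_, hxU⟩ ⟨hy, hyU⟩ =>
        ⟨hxU hy, fun u hu => by simpa [mul_assoc] using hxU (hyU hu)⟩ }
  exact ⟨W, hUo.inter (isOpen_setOf_mapsTo_of_continuous_uncurry continuous_mul hUc hUo),
    inter_subset_left⟩

theorem exists_isCompact_isOpen_nonUnitalSubring [TopologicalSpace A] [IsTopologicalRing A]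
    [T2Space A] [LocallyCompactSpace A] [TotallyDisconnectedSpace A] :
    ∃ W : NonUnitalSubring A, IsCompact (W : Set A) ∧ IsOpen (W : Set A) := by
  obtain ⟨U, hUc, hUo⟩ := exists_isCompact_isOpen_addSubgroup (G := A)
  obtain ⟨W, hWo, hWU⟩ := U.exists_isOpen_nonUnitalSubring_le hUc hUo
  exact ⟨W, hUc.of_isClosed_subset (AddSubgroup.isClosed_of_isOpen W.toAddSubgroup hWo) hWU,
    hWo⟩

namespace NonUnitalSubring

/-- For multiplicatively closed `C`, the largest subring of `W` stable under multiplication by `C`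
on both sides: this is `C¹ x C¹ ⊆ W`, spelled out since there is no unit. -/
def bimodCore (W : NonUnitalSubring A) (C : Set A) : NonUnitalSubring A where
  carrier := {x | x ∈ W ∧ ∀ c ∈ C, c * x ∈ W ∧ x * c ∈ W ∧ ∀ c' ∈ C, c * x * c' ∈ W}
  zero_mem' := ⟨W.zero_mem, fun c _ => by simp⟩
  add_mem' := fun ⟨hx, hxC⟩ ⟨hy, hyC⟩ => ⟨W.add_mem hx hy, fun c hc =>
    ⟨by simpa [mul_add] using W.add_mem (hxC c hc).1 (hyC c hc).1,
     by simpa [add_mul] using W.add_mem (hxC c hc).2.1 (hyC c hc).2.1,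
     fun c' hc' => by
       simpa [mul_add, add_mul] using W.add_mem ((hxC c hc).2.2 c' hc') ((hyC c hc).2.2 c' hc')⟩⟩
  neg_mem' := fun ⟨hx, hxC⟩ => ⟨W.neg_mem hx, fun c hc =>
    ⟨by simpa using W.neg_mem (hxC c hc).1, by simpa using W.neg_mem (hxC c hc).2.1,
     fun c' hc' => by simpa using W.neg_mem ((hxC c hc).2.2 c' hc')⟩⟩
  mul_mem' := fun ⟨hx, hxC⟩ ⟨hy, hyC⟩ => ⟨W.mul_mem hx hy, fun c hc =>
    ⟨by simpa [mul_assoc] using W.mul_mem (hxC c hc).1 hy,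
     by simpa [mul_assoc] using W.mul_mem hx (hyC c hc).2.1,
     fun c' hc' => by simpa [mul_assoc] using W.mul_mem (hxC c hc).1 (hyC c' hc').2.1⟩⟩

section BimodCore

variable {W : NonUnitalSubring A} {C : Set A}

theorem bimodCore_le : W.bimodCore C ≤ W := fun _ hx => hx.1

variable [TopologicalSpace A] [IsTopologicalRing A]

theorem isOpen_bimodCore (hW : IsOpen (W : Set A)) (hC : C.Finite) :
    IsOpen (W.bimodCore C : Set A) := by
  have hW0 : ∀ᶠ x in 𝓝 (0 : A), x ∈ W := hW.mem_nhds W.zero_mem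
  have hvanish (f : A → A) (hf : Continuous f) (hf0 : f 0 = 0) : ∀ᶠ x in 𝓝 0, f x ∈ W :=
    (hf.tendsto' 0 0 hf0).eventually hW0
  refine AddSubgroup.isOpen_of_mem_nhds (W.bimodCore C).toAddSubgroup (g := 0) ?_
  exact hW0.and <| hC.eventually_all.2 fun c _ =>
    (hvanish _ (continuous_const_mul c) (mul_zero c)).and <|
      (hvanish _ (continuous_mul_const c) (zero_mul c)).and <| hC.eventually_all.2 fun c' _ =>
        hvanish _ (by fun_prop) (by simp)

theorem isCompact_bimodCore (hWc : IsCompact (W : Set A)) (hWo : IsOpen (W : Set A))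
    (hC : C.Finite) : IsCompact (W.bimodCore C : Set A) :=
  hWc.of_isClosed_subset
    (AddSubgroup.isClosed_of_isOpen (W.bimodCore C).toAddSubgroup (isOpen_bimodCore hWo hC))
    bimodCore_le

end BimodCore

section MulMemClass

variable {W : NonUnitalSubring A} {S : Type*} [SetLike S A] [MulMemClass S A] {C : S} {c x : A}

theorem mul_mem_bimodCore_left (hc : c ∈ C) (hx : x ∈ W.bimodCore C) :
    c * x ∈ W.bimodCore C := by
  obtain ⟨-, hxC⟩ := hx
  refine ⟨(hxC c hc).1, fun d hd => ⟨?_, ?_, fun d' hd' => ?_⟩⟩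
  · simpa [mul_assoc] using (hxC _ (mul_mem hd hc)).1
  · exact (hxC c hc).2.2 d hd
  · simpa [mul_assoc] using (hxC _ (mul_mem hd hc)).2.2 d' hd'

theorem mul_mem_bimodCore_right (hc : c ∈ C) (hx : x ∈ W.bimodCore C) :
    x * c ∈ W.bimodCore C := by
  obtain ⟨-, hxC⟩ := hx
  refine ⟨(hxC c hc).2.1, fun d hd => ⟨?_, ?_, fun d' hd' => ?_⟩⟩
  · simpa [mul_assoc] using (hxC d hd).2.2 c hc
  · simpa [mul_assoc] using (hxC _ (mul_mem hc hd)).2.1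
  · simpa [mul_assoc] using (hxC d hd).2.2 _ (mul_mem hc hd')

end MulMemClass

section Sup

variable {V : NonUnitalSubring A}

theorem toAddSubgroup_sup_of_mul_mem {C : NonUnitalSubring A}
    (h : ∀ c ∈ C, ∀ v ∈ V, c * v ∈ C.toAddSubgroup ⊔ V.toAddSubgroup ∧
      v * c ∈ C.toAddSubgroup ⊔ V.toAddSubgroup) :
    (C ⊔ V).toAddSubgroup = C.toAddSubgroup ⊔ V.toAddSubgroup := by
  set M := C.toAddSubgroup ⊔ V.toAddSubgroup
  have hCM : ∀ {x}, x ∈ C → x ∈ M := fun hx => AddSubgroup.mem_sup_left hx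
  have hVM : ∀ {x}, x ∈ V → x ∈ M := fun hx => AddSubgroup.mem_sup_right hx
  let S : NonUnitalSubring A :=
    { M with
      mul_mem' := fun {x y} hx hy => by
        obtain ⟨c, hc, v, hv, rfl⟩ := AddSubgroup.mem_sup.1 hx
        obtain ⟨c', hc', v', hv', rfl⟩ := AddSubgroup.mem_sup.1 hy
        rw [add_mul, mul_add, mul_add]
        exact M.add_mem (M.add_mem (hCM (C.mul_mem hc hc')) (h c hc v' hv').1)
          (M.add_mem (h c' hc' v hv).2 (hVM (V.mul_mem hv hv'))) }
  refine le_antisymm (?_ : C ⊔ V ≤ S) (sup_le (fun x hx => ?_) (fun x hx => ?_))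
  · exact sup_le (fun x hx => hCM hx) (fun x hx => hVM hx)
  · exact (le_sup_left : C ≤ C ⊔ V) hx
  · exact (le_sup_right : V ≤ C ⊔ V) hx

theorem toAddSubgroup_closure_sup_of_mul_mem {s : Set A}
    (h : ∀ g ∈ s, ∀ v ∈ V, g * v ∈ (closure s).toAddSubgroup ⊔ V.toAddSubgroup ∧
      v * g ∈ (closure s).toAddSubgroup ⊔ V.toAddSubgroup) :
    (closure s ⊔ V).toAddSubgroup = (closure s).toAddSubgroup ⊔ V.toAddSubgroup := by
  set M := (closure s).toAddSubgroup ⊔ V.toAddSubgroup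
  refine toAddSubgroup_sup_of_mul_mem fun c hc => ?_
  induction hc using closure_induction with
  | mem g hg => exact h g hg
  | zero => simp
  | add x y _ _ hx hy =>
    exact fun v hv => ⟨by simpa [add_mul] using M.add_mem (hx v hv).1 (hy v hv).1,
      by simpa [mul_add] using M.add_mem (hx v hv).2 (hy v hv).2⟩
  | neg x _ hx =>
    exact fun v hv =>
      ⟨by simpa using M.neg_mem (hx v hv).1, by simpa using M.neg_mem (hx v hv).2⟩
  | mul x y hxs hys hx hy =>
    refine fun v hv => ⟨?_, ?_⟩
    · obtain ⟨c, hc, w, hw, hcw⟩ := AddSubgroup.mem_sup.1 (hy v hv).1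
      rw [mul_assoc, ← hcw, mul_add]
      exact M.add_mem (AddSubgroup.mem_sup_left ((closure s).mul_mem hxs hc)) (hx w hw).1
    · obtain ⟨c, hc, w, hw, hcw⟩ := AddSubgroup.mem_sup.1 (hx v hv).2
      rw [← mul_assoc, ← hcw, add_mul]
      exact M.add_mem (AddSubgroup.mem_sup_left ((closure s).mul_mem hc hys)) (hy w hw).2

end Sup

def IsLocallyFinite (B : NonUnitalSubring A) : Prop :=
  ∀ S : Finset A, (S : Set A) ⊆ B →
    ∃ C : NonUnitalSubring A, (C : Set A) ⊆ B ∧ (C : Set A).Finite ∧ (S : Set A) ⊆ C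

theorem IsLocallyFinite.finite_closure {B : NonUnitalSubring A} (hB : B.IsLocallyFinite)
    {s : Set A} (hs : s.Finite) (hsB : s ⊆ B) : (closure s : Set A).Finite := by
  obtain ⟨C, -, hC, hsC⟩ := hB hs.toFinset (by simpa using hsB)
  exact hC.subset (closure_le.2 (by simpa using hsC))

theorem exists_isCompact_ge_of_dense [TopologicalSpace A] [IsTopologicalRing A]
    {B : NonUnitalSubring A} (hB : Dense (B : Set A)) (hlf : B.IsLocallyFinite)
    {W : NonUnitalSubring A} (hWc : IsCompact (W : Set A)) (hWo : IsOpen (W : Set A))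
    {F : Set A} (hF : F.Finite) (hFB : F ⊆ B) :
    ∃ S : NonUnitalSubring A, IsCompact (S : Set A) ∧ W ≤ S ∧ F ⊆ S := by
  set C₀ := NonUnitalSubring.closure F
  set V := W.bimodCore C₀
  have hC₀ : (C₀ : Set A).Finite := hlf.finite_closure hF hFB
  obtain ⟨E, hEWB, hE, hWEV⟩ := hWc.exists_finite_subset_add
    (hB.open_subset_closure_inter hWo) (isOpen_bimodCore hWo hC₀) V.zero_mem
  set C₁ := NonUnitalSubring.closure (F ∪ E)
  have hWM : ∀ w ∈ W, w ∈ C₁.toAddSubgroup ⊔ V.toAddSubgroup := fun w hw => by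
    obtain ⟨e, he, v, hv, rfl⟩ := hWEV hw
    exact AddSubgroup.add_mem_sup (NonUnitalSubring.subset_closure (Or.inr he)) hv
  have hS : (C₁ ⊔ V).toAddSubgroup = C₁.toAddSubgroup ⊔ V.toAddSubgroup := by
    refine toAddSubgroup_closure_sup_of_mul_mem fun g hg v hv => ?_
    rcases hg with hgF | hgE
    · have hgC₀ : g ∈ C₀ := NonUnitalSubring.subset_closure hgF
      exact ⟨AddSubgroup.mem_sup_right (mul_mem_bimodCore_left hgC₀ hv),
        AddSubgroup.mem_sup_right (mul_mem_bimodCore_right hgC₀ hv)⟩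
    · exact ⟨hWM _ (W.mul_mem (hEWB hgE).1 (bimodCore_le hv)),
        hWM _ (W.mul_mem (bimodCore_le hv) (hEWB hgE).1)⟩
  have hC₁ : (C₁ : Set A).Finite :=
    hlf.finite_closure (hF.union hE) (union_subset hFB fun e he => (hEWB he).2)
  refine ⟨C₁ ⊔ V, ?_, fun w hw => ?_, fun f hf => ?_⟩
  · rw [← coe_toAddSubgroup, hS, AddSubgroup.add_normal]
    exact hC₁.isCompact.add (isCompact_bimodCore hWc hWo hC₀)
  · rw [← mem_toAddSubgroup, hS]
    exact hWM w hw
  · exact (le_sup_left : C₁ ≤ C₁ ⊔ V) (NonUnitalSubring.subset_closure (Or.inl hf))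

end NonUnitalSubring

end NonUnitalRing

/-- A locally compact, totally disconnected, compactly generated Hausdorff
topological ring containing a dense locally finite subring is compact. -/
theorem compact_of_dense_locallyFinite_subring {A : Type*} [NonUnitalRing A]
    [TopologicalSpace A] [IsTopologicalRing A] [T2Space A]
    [LocallyCompactSpace A] [TotallyDisconnectedSpace A]
    (hgen : ∃ K : Set A, IsCompact K ∧ NonUnitalSubring.closure K = ⊤)
    (B : NonUnitalSubring A) (hB : Dense (B : Set A))
    (hlf : ∀ S : Finset A, (S : Set A) ⊆ (B : Set A) →
      ∃ C : NonUnitalSubring A, (C : Set A) ⊆ (B : Set A) ∧ (C : Set A).Finite ∧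
        (S : Set A) ⊆ (C : Set A)) :
    CompactSpace A := by
  obtain ⟨K, hKc, hKgen⟩ := hgen
  obtain ⟨W, hWc, hWo⟩ := exists_isCompact_isOpen_nonUnitalSubring (A := A)
  obtain ⟨F, hFB, hF, hKF⟩ := hKc.exists_finite_subset_add (fun x _ => hB x) hWo W.zero_mem
  obtain ⟨S, hSc, hWS, hFS⟩ := NonUnitalSubring.exists_isCompact_ge_of_dense hB hlf hWc hWo hF hFB
  have hKS : K ⊆ S := hKF.trans (add_subset_iff.2 fun f hf w hw => S.add_mem (hFS hf) (hWS hw))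
  have hS : S = ⊤ := top_unique (hKgen ▸ NonUnitalSubring.closure_le.2 hKS)
  exact isCompact_univ_iff.1 (by simpa [hS] using hSc)
end

section
/- Let R be a simple ring with identity (nontrivial, only two-sided ideals 0 and R) of characteristic p for a prime p, endowed with a nondiscrete Hausdorff locally compact ring topology. Let V be a compact open (nonunital) subring of R and let (e_α)_{α∈Ω} be a family of nonzero idempotents of R that are pairwise orthogonal (e_α·e_β = 0 for α ≠ β). Then the cardinality of Ω is at most the weight of V; concretely, for every family 𝔅 of open subsets of the subspace V that forms a base of the subspace topology of V, one has #Ω ≤ #𝔅. -/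
/-!
The elements annihilated on the left by a neighbourhood of `0` form a two-sided ideal, which
contains `1` only for the discrete topology; so in a simple non-discrete ring every neighbourhood
of `0`, in particular `V`, contains some `v_α ≠ 0` with `v_α e_α = v_α`, hence `v_α e_β = 0` for
`β ≠ α`. The open sets `{x ∈ V | x e_α ≠ 0}` therefore separate the points `v_α`, and a basic open
set around each `v_α` inside its separating set determines `α`.
-/

universe u v

open Filter Topology

theorem TopologicalSpace.IsTopologicalBasis.lift_mk_le_of_separating {X : Type u}
    [TopologicalSpace X] {𝔅 : Set (Set X)} (h𝔅 : IsTopologicalBasis 𝔅) {ι : Type v}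
    (x : ι → X) (U : ι → Set X) (hU : ∀ i, IsOpen (U i)) (hxU : ∀ i, x i ∈ U i)
    (hxU_ne : ∀ i j, i ≠ j → x j ∉ U i) :
    Cardinal.lift.{u} (Cardinal.mk ι) ≤ Cardinal.lift.{v} (Cardinal.mk 𝔅) := by
  choose B hB𝔅 hxB hBU using fun i => h𝔅.exists_subset_of_mem_open (hxU i) (hU i)
  refine Cardinal.lift_mk_le'.mpr ⟨⟨fun i => ⟨B i, hB𝔅 i⟩, fun i j hij => ?_⟩⟩
  by_contra hne
  have hBij : B i = B j := congrArg Subtype.val hij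
  exact hxU_ne i j hne (hBU i (hBij ▸ hxB j))

section NhdsLeftAnnihilator

variable (R : Type u) [Ring R] [TopologicalSpace R] [IsTopologicalRing R]

def nhdsLeftAnnihilator : TwoSidedIdeal R :=
  TwoSidedIdeal.mk' {x | ∀ᶠ u in 𝓝 0, u * x = 0}
    (Eventually.of_forall fun u => mul_zero u)
    (fun hx hy => (hx.and hy).mono fun u h => by rw [mul_add, h.1, h.2, add_zero])
    (fun hx => hx.mono fun u h => by rw [mul_neg, h, neg_zero])
    (fun {x y} hy => by
      have hx : Tendsto (· * x) (𝓝 (0 : R)) (𝓝 0) :=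
        (continuous_mul_const x).tendsto' 0 0 (zero_mul x)
      exact (hx.eventually hy).mono fun u h => by rw [← mul_assoc, h])
    (fun {x y} hx => hx.mono fun u h => by rw [← mul_assoc, h, zero_mul])

variable {R}

theorem mem_nhdsLeftAnnihilator {x : R} :
    x ∈ nhdsLeftAnnihilator R ↔ ∀ᶠ u in 𝓝 0, u * x = 0 :=
  TwoSidedIdeal.mem_mk' _ _ _ _ _ _ x

theorem one_mem_nhdsLeftAnnihilator_iff : 1 ∈ nhdsLeftAnnihilator R ↔ DiscreteTopology R := by
  simp only [mem_nhdsLeftAnnihilator, mul_one, discreteTopology_iff_isOpen_singleton_zero,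
    isOpen_singleton_iff_nhds_eq_pure]
  exact ⟨fun h => le_antisymm (le_pure_iff.mpr h) (pure_le_nhds 0), fun h => le_pure_iff.mp h.le⟩

theorem nhdsLeftAnnihilator_eq_bot [IsSimpleRing R] (hnd : ¬ DiscreteTopology R) :
    nhdsLeftAnnihilator R = ⊥ :=
  (IsSimpleOrder.eq_bot_or_eq_top _).resolve_right fun h =>
    hnd (one_mem_nhdsLeftAnnihilator_iff.mp (h ▸ trivial))

theorem exists_mem_mul_ne_zero_of_mem_nhds [IsSimpleRing R] (hnd : ¬ DiscreteTopology R)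
    {c : R} (hc : c ≠ 0) {W : Set R} (hW : W ∈ 𝓝 0) : ∃ w ∈ W, w * c ≠ 0 := by
  by_contra! h
  have hc_mem : c ∈ nhdsLeftAnnihilator R := mem_nhdsLeftAnnihilator.mpr (mem_of_superset hW h)
  rw [nhdsLeftAnnihilator_eq_bot hnd] at hc_mem
  exact hc hc_mem

theorem exists_mem_ne_zero_mul_eq_of_isIdempotentElem [IsSimpleRing R]
    (hnd : ¬ DiscreteTopology R) {e : R} (he : IsIdempotentElem e) (he0 : e ≠ 0) {U : Set R}
    (hU : U ∈ 𝓝 0) : ∃ v ∈ U, v ≠ 0 ∧ v * e = v := by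
  have hW : (· * e) ⁻¹' U ∈ 𝓝 0 :=
    (continuous_mul_const e).continuousAt.preimage_mem_nhds (by rwa [zero_mul])
  obtain ⟨w, hwU, hw⟩ := exists_mem_mul_ne_zero_of_mem_nhds hnd he0 hW
  exact ⟨w * e, hwU, hw, by rw [mul_assoc, he.eq]⟩

end NhdsLeftAnnihilator

theorem card_orthogonal_idempotents_le_weight_general {R : Type u} [Ring R] [IsSimpleRing R]
    [TopologicalSpace R] [IsTopologicalRing R] [T2Space R]
    (hnd : ¬ DiscreteTopology R)
    (V : NonUnitalSubring R) (hVo : IsOpen (V : Set R))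
    {Ω : Type v} (e : Ω → R)
    (hidem : ∀ α, e α * e α = e α)
    (hne : ∀ α, e α ≠ 0)
    (horth : ∀ α β, α ≠ β → e α * e β = 0)
    (𝔅 : Set (Set V)) (h𝔅 : TopologicalSpace.IsTopologicalBasis 𝔅) :
    Cardinal.lift.{u} (Cardinal.mk Ω) ≤ Cardinal.lift.{v} (Cardinal.mk 𝔅) := by
  have hsep : ∀ α, ∃ v : V, (v : R) ≠ 0 ∧ (v : R) * e α = v := fun α => by
    obtain ⟨v, hvV, hv0, hve⟩ := exists_mem_ne_zero_mul_eq_of_isIdempotentElem hnd (hidem α)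
      (hne α) (hVo.mem_nhds V.zero_mem)
    exact ⟨⟨v, hvV⟩, hv0, hve⟩
  choose v hv0 hve using hsep
  refine h𝔅.lift_mk_le_of_separating v (fun α => {x : V | (x : R) * e α ≠ 0})
    (fun α => ?_) (fun α => show (v α : R) * e α ≠ 0 by rw [hve]; exact hv0 α)
    fun α β hαβ hβ => hβ (by rw [← hve β, mul_assoc, horth β α (Ne.symm hαβ), mul_zero])
  exact (isClosed_singleton.preimage
    ((continuous_mul_const (e α)).comp continuous_subtype_val)).isOpen_compl

/-- In a simple nondiscrete locally compact Hausdorff topological ring of prime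
characteristic `p` with identity, any family of nonzero pairwise orthogonal
idempotents has cardinality at most the weight of any compact open subring `V`:
the index set injects cardinality-wise into any base of the subspace topology
of `V`. -/
theorem card_orthogonal_idempotents_le_weight {R : Type u} [Ring R] [IsSimpleRing R]
    [TopologicalSpace R] [IsTopologicalRing R] [T2Space R] [LocallyCompactSpace R]
    (hnd : ¬ DiscreteTopology R) (p : ℕ) (hp : p.Prime) [CharP R p]
    (V : NonUnitalSubring R) (hVc : IsCompact (V : Set R)) (hVo : IsOpen (V : Set R))
    {Ω : Type v} (e : Ω → R)
    (hidem : ∀ α, e α * e α = e α)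
    (hne : ∀ α, e α ≠ 0)
    (horth : ∀ α β, α ≠ β → e α * e β = 0)
    (𝔅 : Set (Set V)) (h𝔅 : TopologicalSpace.IsTopologicalBasis 𝔅) :
    Cardinal.lift.{u} (Cardinal.mk Ω) ≤ Cardinal.lift.{v} (Cardinal.mk 𝔅) :=
  card_orthogonal_idempotents_le_weight_general hnd V hVo e hidem hne horth 𝔅 h𝔅
end

section
/- Every Hausdorff ring topology 𝒰 on the ring I of finite-image endomorphisms such that (I, 𝒰) is a Baire space is discrete. Equivalently, I does not admit a nondiscrete Hausdorff ring topology for which I is a Baire space. -/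
/-- The (nonunital) ring of endomorphisms with finite image of the countable
elementary abelian `p`-group `ℕ →₀ ZMod p`. -/
def finRangeEndSubring (p : ℕ) : NonUnitalSubring (Module.End (ZMod p) (ℕ →₀ ZMod p)) where
  carrier := {α : Module.End (ZMod p) (ℕ →₀ ZMod p) | (Set.range α).Finite}
  zero_mem' := (Set.finite_singleton 0).subset (by rintro _ ⟨x, rfl⟩; simp)
  add_mem' {a b} ha hb := (Set.Finite.image2 (· + ·) ha hb).subset
    (by rintro _ ⟨x, rfl⟩
        exact Set.mem_image2_of_mem ⟨x, rfl⟩ ⟨x, rfl⟩)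
  neg_mem' {a} ha := (ha.image Neg.neg).subset
    (by rintro _ ⟨x, rfl⟩; exact ⟨a x, ⟨x, rfl⟩, rfl⟩)
  mul_mem' {a b} ha hb := ha.subset (by rintro _ ⟨x, rfl⟩; exact ⟨b x, rfl⟩)

/-!
Let `e_m` be the projection onto the first `m` coordinates. Every finite-image endomorphism
`x` satisfies `e_m x = x` for some `m`, so the closed additive subgroups
`{x | e_m x = x}` cover the ring, and by the Baire property one of them, say for `m = n`, has
nonempty interior and is therefore open. If `g` shifts the first `n` coordinates to the
next `n`, then `e_n g = 0`, so any `y` with `e_n y = y` and `e_n (g y) = g y` satisfies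
`g y = e_n g y = 0`, whence `y = 0`. This exhibits `{0}` as an open set.
-/

section LeftFixed

variable {R : Type*} [NonUnitalRing R]

def leftFixed (e : R) : AddSubgroup R :=
  (AddMonoidHom.mulLeft e - AddMonoidHom.id R).ker

lemma mem_leftFixed {e x : R} : x ∈ leftFixed e ↔ e * x = x := by
  simp [leftFixed, sub_eq_zero]

variable [TopologicalSpace R] [IsTopologicalRing R]

lemma isClosed_leftFixed [T1Space R] (e : R) : IsClosed (leftFixed e : Set R) := by
  have : (leftFixed e : Set R) = (fun x => e * x - x) ⁻¹' {0} := by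
    ext x
    simp [mem_leftFixed, sub_eq_zero]
  rw [this]
  exact isClosed_singleton.preimage ((continuous_const_mul e).sub continuous_id)

theorem discreteTopology_of_forall_exists_mul_eq_self [T1Space R] [BaireSpace R]
    {ι : Type*} [Countable ι] (e : ι → R) (hcover : ∀ x, ∃ i, e i * x = x)
    (hsep : ∀ i, ∃ g, e i * g = 0 ∧ ∀ y, e i * y = y → g * y = 0 → y = 0) :
    DiscreteTopology R := by
  have : Nonempty R := ⟨0⟩
  obtain ⟨i, x, hx⟩ := nonempty_interior_of_iUnion_of_closed
    (fun i => isClosed_leftFixed (e i))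
    (Set.eq_univ_of_forall fun x => Set.mem_iUnion.2 ((hcover x).imp fun _ => mem_leftFixed.2))
  have hopen : IsOpen (leftFixed (e i) : Set R) :=
    AddSubgroup.isOpen_of_mem_nhds _ (mem_interior_iff_mem_nhds.1 hx)
  obtain ⟨g, hg, hinj⟩ := hsep i
  refine discreteTopology_of_isOpen_singleton_zero ?_
  convert hopen.inter (hopen.preimage (continuous_const_mul g)) using 1
  ext y
  simp only [Set.mem_singleton_iff, Set.mem_inter_iff, Set.mem_preimage, SetLike.mem_coe,
    mem_leftFixed]
  constructor
  · rintro rfl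
    simp
  · rintro ⟨hy, hgy⟩
    refine hinj y hy ?_
    rw [← hgy, ← mul_assoc, hg, zero_mul]

end LeftFixed

section MoveCoords

variable {R : Type*} [Semiring R]

noncomputable def moveCoords (σ : ℕ → ℕ) (m : ℕ) : Module.End R (ℕ →₀ R) :=
  ∑ i ∈ Finset.range m, (Finsupp.lsingle (σ i)).comp (Finsupp.lapply i)

lemma moveCoords_apply (σ : ℕ → ℕ) (m : ℕ) (v : ℕ →₀ R) :
    moveCoords σ m v = ∑ i ∈ Finset.range m, Finsupp.single (σ i) (v i) := by
  simp [moveCoords]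

lemma moveCoords_apply_apply {σ : ℕ → ℕ} (hσ : σ.Injective) (m : ℕ) (v : ℕ →₀ R) (j : ℕ) :
    moveCoords σ m v (σ j) = if j < m then v j else 0 := by
  simp [moveCoords_apply, Finsupp.finsetSum_apply, Finsupp.single_apply, hσ.eq_iff]

lemma moveCoords_apply_eq_zero {σ : ℕ → ℕ} {m j : ℕ} (h : ∀ i < m, σ i ≠ j) (v : ℕ →₀ R) :
    moveCoords σ m v j = 0 := by
  simp only [moveCoords_apply, Finsupp.finsetSum_apply, Finsupp.single_apply]
  exact Finset.sum_eq_zero fun i hi => if_neg (h i (Finset.mem_range.1 hi))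

lemma finite_range_moveCoords [Finite R] (σ : ℕ → ℕ) (m : ℕ) :
    (Set.range (moveCoords (R := R) σ m)).Finite := by
  refine (Set.finite_range fun c : Fin m → R => ∑ i : Fin m, Finsupp.single (σ i) (c i)).subset ?_
  rintro _ ⟨v, rfl⟩
  exact ⟨fun i => v i, by rw [moveCoords_apply, ← Fin.sum_univ_eq_sum_range]⟩

lemma exists_moveCoords_id_mul_eq_self {x : Module.End R (ℕ →₀ R)} (hx : (Set.range x).Finite) :
    ∃ m, moveCoords id m * x = x := by
  obtain ⟨N, hN⟩ := (hx.biUnion fun w _ => w.support.finite_toSet).bddAbove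
  refine ⟨N + 1, LinearMap.ext fun v => Finsupp.ext fun j => ?_⟩
  rw [Module.End.mul_apply, ← id_eq j, moveCoords_apply_apply Function.injective_id]
  split_ifs with hj
  · rfl
  · by_contra hne
    have hj_mem : j ∈ (x v).support := Finsupp.mem_support_iff.2 (Ne.symm hne)
    exact hj (Nat.lt_succ_of_le (hN (Set.mem_biUnion ⟨v, rfl⟩ hj_mem)))

lemma moveCoords_id_mul_moveCoords_add (n : ℕ) :
    moveCoords (R := R) id n * moveCoords (n + ·) n = 0 := by
  refine LinearMap.ext fun v => Finsupp.ext fun j => ?_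
  rw [Module.End.mul_apply, ← id_eq j, moveCoords_apply_apply Function.injective_id]
  split_ifs with hj
  · exact moveCoords_apply_eq_zero (fun i _ => by simp; omega) _
  · rfl

lemma eq_zero_of_moveCoords_mul {n : ℕ} {y : Module.End R (ℕ →₀ R)}
    (hy : moveCoords id n * y = y) (hgy : moveCoords (n + ·) n * y = 0) : y = 0 := by
  refine LinearMap.ext fun v => Finsupp.ext fun j => ?_
  have hproj := congr($hy v j)
  have hshift := congr($hgy v (n + j))
  rw [Module.End.mul_apply, ← id_eq j, moveCoords_apply_apply Function.injective_id] at hproj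
  rw [Module.End.mul_apply, moveCoords_apply_apply (add_right_injective n)] at hshift
  simp only [id_eq, LinearMap.zero_apply, Finsupp.coe_zero, Pi.zero_apply] at hproj hshift ⊢
  split_ifs at hproj hshift with hj
  · exact hshift
  · exact hproj.symm

end MoveCoords

/-- Every Hausdorff ring topology on the ring of finite-image endomorphisms of a
countable elementary abelian `p`-group which makes it a Baire space is discrete. -/
theorem finRangeEnd_baire_discrete (p : ℕ) [Fact p.Prime]
    (t : TopologicalSpace (finRangeEndSubring p))
    (htr : @IsTopologicalRing (finRangeEndSubring p) t _)
    (ht2 : @T2Space (finRangeEndSubring p) t)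
    (hbaire : @BaireSpace (finRangeEndSubring p) t) :
    @DiscreteTopology (finRangeEndSubring p) t := by
  let := t
  have : NeZero p := ⟨(Fact.out : p.Prime).ne_zero⟩
  let e (m : ℕ) : finRangeEndSubring p := ⟨moveCoords id m, finite_range_moveCoords id m⟩
  refine discreteTopology_of_forall_exists_mul_eq_self e (fun x => ?_) (fun n => ?_)
  · obtain ⟨m, hm⟩ := exists_moveCoords_id_mul_eq_self x.2
    exact ⟨m, Subtype.ext hm⟩
  · refine ⟨⟨moveCoords (n + ·) n, finite_range_moveCoords _ n⟩,
      Subtype.ext (moveCoords_id_mul_moveCoords_add n), fun y hy hgy => ?_⟩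
    exact Subtype.ext (eq_zero_of_moveCoords_mul congr(Subtype.val $hy) congr(Subtype.val $hgy))
end

section
/- Every Hausdorff locally compact ring topology on End(A) is discrete. Equivalently, the endomorphism ring of a countable elementary abelian p-group does not admit a nondiscrete Hausdorff locally compact ring topology. -/
/-!
For a coordinate projection `P c`, right multiplication `x ↦ x * P c` maps `End A` onto the closed
subgroup `{x | x * P c = x}`, which is countable, hence discrete by the Baire category theorem.
So the left annihilator of each `P c` is open, and every compact set has finite image under
`· * P c`. Take a compact neighbourhood `K` of `0`. The joint left annihilators `V` of
`P 0, …, P (M - 1)` are open left ideals shrinking to `{0}` as `M` grows, so by compactness one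
of them satisfies `s * (K ∩ V) ⊆ K` for the shift `s`. If `K ∩ V` contained some `u ≠ 0`, say
with `u * P c ≠ 0`, the elements `s ^ k * u * P c` would be pairwise distinct and would all lie
in the finite set `K * P c`. Hence `K ∩ V = {0}` is a neighbourhood of `0`.
-/

open Set Function Finsupp Topology

theorem discreteTopology_of_countable_of_baireSpace {H : Type*} [AddGroup H]
    [TopologicalSpace H] [SeparatelyContinuousAdd H] [T1Space H] [BaireSpace H] [Countable H] :
    DiscreteTopology H := by
  obtain ⟨y, z, hz⟩ := nonempty_interior_of_iUnion_of_closed (fun y : H => isClosed_singleton)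
    (iUnion_of_singleton H)
  obtain rfl : z = y := mem_singleton_iff.1 (interior_subset hz)
  have hopen : IsOpen ({z} : Set H) := by
    refine isOpen_iff_mem_nhds.2 ?_
    rintro x rfl
    exact mem_interior_iff_mem_nhds.1 hz
  refine discreteTopology_of_isOpen_singleton_zero ?_
  have : ({0} : Set H) = (· + z) ⁻¹' {z} := by ext; simp
  exact this ▸ hopen.preimage (continuous_add_const z)

theorem AddMonoidHom.isOpen_ker_of_countable_range {G H : Type*} [AddGroup G]
    [TopologicalSpace G] [AddGroup H] [TopologicalSpace H] [IsTopologicalAddGroup H] [T2Space H]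
    [LocallyCompactSpace H] (f : G →+ H) (hf : Continuous f) (hclosed : IsClosed (Set.range f))
    (hcount : (Set.range f).Countable) : IsOpen (f.ker : Set G) := by
  rw [← f.coe_range] at hclosed hcount
  have : LocallyCompactSpace f.range := hclosed.locallyCompactSpace
  have : Countable f.range := hcount.to_subtype
  have : DiscreteTopology f.range := discreteTopology_of_countable_of_baireSpace
  rw [← f.ker_rangeRestrict]
  exact (isOpen_discrete ({0} : Set f.range)).preimage (hf.codRestrict _)

theorem AddMonoidHom.finite_image_of_isOpen_ker {G H : Type*} [AddGroup G] [TopologicalSpace G]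
    [IsTopologicalAddGroup G] [AddGroup H] (f : G →+ H) (hker : IsOpen (f.ker : Set G))
    {K : Set G} (hK : IsCompact K) : (f '' K).Finite := by
  have hf : IsLocallyConstant f := by
    refine (IsLocallyConstant.iff_exists_open f).2 fun x => ⟨(· - x) ⁻¹' f.ker,
      hker.preimage (continuous_sub_right x), by simp, fun x' hx' => ?_⟩
    simpa [sub_eq_zero] using hx'
  have : CompactSpace K := isCompact_iff_compactSpace.1 hK
  rw [image_eq_range]
  exact (hf.comp_continuous continuous_subtype_val).range_finite

section LeftAnnihilatorUpTo

variable {R : Type*} [SemigroupWithZero R] {P : ℕ → R}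

def leftAnnihilatorUpTo (P : ℕ → R) (N : ℕ) : Set R := ⋂ c < N, {x | x * P c = 0}

theorem mem_leftAnnihilatorUpTo {N : ℕ} {x : R} :
    x ∈ leftAnnihilatorUpTo P N ↔ ∀ c < N, x * P c = 0 := by
  simp [leftAnnihilatorUpTo]

theorem leftAnnihilatorUpTo_antitone : Antitone (leftAnnihilatorUpTo P) :=
  fun _ _ hNM _ hx => mem_leftAnnihilatorUpTo.2 fun c hc =>
    mem_leftAnnihilatorUpTo.1 hx c (hc.trans_le hNM)

theorem mapsTo_mul_leftAnnihilatorUpTo (s : R) (N : ℕ) :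
    MapsTo (s * ·) (leftAnnihilatorUpTo P N) (leftAnnihilatorUpTo P N) :=
  fun x hx => mem_leftAnnihilatorUpTo.2 fun c hc => by
    rw [mul_assoc, mem_leftAnnihilatorUpTo.1 hx c hc, mul_zero]

theorem iInter_leftAnnihilatorUpTo_subset (hsep : ∀ x : R, (∀ c, x * P c = 0) → x = 0) :
    ⋂ N, leftAnnihilatorUpTo P N ⊆ {0} := fun x hx =>
  hsep x fun c => mem_leftAnnihilatorUpTo.1 (mem_iInter.1 hx (c + 1)) c c.lt_succ_self

variable [TopologicalSpace R]

theorem isClosed_leftAnnihilatorUpTo [ContinuousMul R] [T1Space R] (N : ℕ) :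
    IsClosed (leftAnnihilatorUpTo P N) :=
  isClosed_biInter fun c _ => isClosed_singleton.preimage (continuous_mul_const (P c))

theorem leftAnnihilatorUpTo_mem_nhds_zero (hopen : ∀ c, IsOpen {x : R | x * P c = 0}) (N : ℕ) :
    leftAnnihilatorUpTo P N ∈ 𝓝 0 :=
  ((finite_lt_nat N).isOpen_biInter fun c _ => hopen c).mem_nhds
    (mem_leftAnnihilatorUpTo.2 fun c _ => zero_mul (P c))

theorem exists_mapsTo_mul_inter_leftAnnihilatorUpTo [ContinuousMul R] [T2Space R] (s : R)
    (hsep : ∀ x : R, (∀ c, x * P c = 0) → x = 0) {K : Set R} (hK : IsCompact K)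
    (hK0 : K ∈ 𝓝 0) : ∃ M, MapsTo (s * ·) (K ∩ leftAnnihilatorUpTo P M) K := by
  refine exists_subset_nhds_of_isCompact' (V := fun N => K ∩ leftAnnihilatorUpTo P N)
    (leftAnnihilatorUpTo_antitone.directed_ge.mono_comp _ fun _ _ => inter_subset_inter_right K)
    (fun N => hK.inter_right (isClosed_leftAnnihilatorUpTo N))
    (fun N => hK.isClosed.inter (isClosed_leftAnnihilatorUpTo N)) fun x hx => ?_
  obtain rfl : x = 0 :=
    iInter_leftAnnihilatorUpTo_subset hsep (iInter_mono (fun _ => inter_subset_right) hx)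
  exact (continuous_const_mul s).continuousAt.preimage_mem_nhds (by simpa using hK0)

end LeftAnnihilatorUpTo

section TopologicalRing

variable {R : Type*} [Ring R] [TopologicalSpace R] [IsTopologicalRing R] [T2Space R]
  [LocallyCompactSpace R]

theorem IsIdempotentElem.isOpen_setOf_mul_eq_zero {e : R} (he : IsIdempotentElem e)
    (hcount : (Set.range (· * e)).Countable) : IsOpen {x : R | x * e = 0} := by
  have hrange : Set.range (· * e) = {x : R | x * e = x} := by
    ext x
    refine ⟨?_, fun hx => ⟨x, hx⟩⟩
    rintro ⟨y, rfl⟩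
    exact (mul_assoc y e e).trans (congrArg (y * ·) he.eq)
  refine (AddMonoidHom.mulRight e).isOpen_ker_of_countable_range (continuous_mul_const e) ?_
    hcount
  exact hrange ▸ isClosed_eq (continuous_mul_const e) continuous_id

theorem discreteTopology_of_injective_shift {P : ℕ → R} (s : R)
    (hopen : ∀ c, IsOpen {x : R | x * P c = 0})
    (hsep : ∀ x : R, (∀ c, x * P c = 0) → x = 0)
    (hshift : ∀ u c, u * P c ≠ 0 → Injective fun k : ℕ => s ^ k * u * P c) :
    DiscreteTopology R := by
  obtain ⟨K, hK, hK0⟩ := exists_compact_mem_nhds (0 : R)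
  obtain ⟨M, hM⟩ := exists_mapsTo_mul_inter_leftAnnihilatorUpTo s hsep hK hK0
  have horbit : MapsTo (s * ·) (K ∩ leftAnnihilatorUpTo P M) (K ∩ leftAnnihilatorUpTo P M) :=
    fun x hx => ⟨hM hx, mapsTo_mul_leftAnnihilatorUpTo s M hx.2⟩
  have hzero : K ∩ leftAnnihilatorUpTo P M ⊆ {0} := by
    rintro u hu
    by_contra hu0
    obtain ⟨c, hc⟩ : ∃ c, u * P c ≠ 0 := not_forall.1 (mt (hsep u) hu0)
    have hfin : ((· * P c) '' K).Finite :=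
      (AddMonoidHom.mulRight (P c)).finite_image_of_isOpen_ker (hopen c) hK
    refine (infinite_of_injective_forall_mem (hshift u c hc) fun k => ?_).not_finite hfin
    refine ⟨s ^ k * u, ?_, rfl⟩
    simpa [mul_left_iterate] using (horbit.iterate k hu).1
  refine discreteTopology_of_isOpen_singleton_zero (isOpen_iff_mem_nhds.2 ?_)
  rintro x rfl
  exact Filter.mem_of_superset
    (Filter.inter_mem hK0 (leftAnnihilatorUpTo_mem_nhds_zero hopen M)) hzero

end TopologicalRing

section CoordinateEndomorphisms

variable {R : Type*} [Semiring R]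

noncomputable def coordProj (c : ℕ) : Module.End R (ℕ →₀ R) := lsingle c ∘ₗ lapply c

noncomputable def shiftEnd : Module.End R (ℕ →₀ R) := lmapDomain R R (· + 1)

theorem mul_coordProj_eq_smulRight (f : Module.End R (ℕ →₀ R)) (c : ℕ) :
    f * coordProj c = (lapply c).smulRight (f (single c 1)) := by
  ext v
  simp [coordProj, ← map_smul]

theorem isIdempotentElem_coordProj (c : ℕ) : IsIdempotentElem (coordProj (R := R) c) := by
  ext v
  simp [coordProj]

theorem countable_range_mul_coordProj [Countable R] (c : ℕ) :
    (range (· * coordProj (R := R) c)).Countable := by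
  refine (countable_range fun w : ℕ →₀ R => (lapply c).smulRight w).mono ?_
  rintro _ ⟨f, rfl⟩
  exact ⟨_, (mul_coordProj_eq_smulRight f c).symm⟩

theorem eq_zero_of_forall_mul_coordProj_eq_zero {f : Module.End R (ℕ →₀ R)}
    (h : ∀ c, f * coordProj c = 0) : f = 0 :=
  lhom_ext fun a b => by simpa [coordProj] using congr($(h a) (single a b))

theorem shiftEnd_pow (k : ℕ) :
    (shiftEnd ^ k : Module.End R (ℕ →₀ R)) = lmapDomain R R (· + k) := by
  induction k with
  | zero => ext; simp
  | succ k ih =>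
    rw [pow_succ, ih, shiftEnd, Module.End.mul_eq_comp, ← lmapDomain_comp]
    congr 1
    funext n
    simp only [comp_apply]
    omega

theorem injective_shiftEnd_pow_apply {w : ℕ →₀ R} (hw : w ≠ 0) :
    Injective fun k => (shiftEnd ^ k : Module.End R (ℕ →₀ R)) w := by
  have hsum : ∀ k, ∑ n ∈ ((shiftEnd ^ k : Module.End R (ℕ →₀ R)) w).support, n =
      ∑ n ∈ w.support, n + w.support.card * k := fun k => by
    rw [shiftEnd_pow, lmapDomain_apply, mapDomain_support_of_injective (add_left_injective k),
      Finset.sum_image fun _ _ _ _ => add_right_cancel, Finset.sum_add_distrib, Finset.sum_const,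
      smul_eq_mul]
  intro k k' h
  have := congr(∑ n ∈ ($h).support, n)
  rw [hsum, hsum] at this
  exact Nat.eq_of_mul_eq_mul_left (support_nonempty_iff.2 hw).card_pos (add_left_cancel this)

theorem injective_shiftEnd_pow_mul_mul_coordProj {f : Module.End R (ℕ →₀ R)} {c : ℕ}
    (hf : f * coordProj c ≠ 0) : Injective fun k => shiftEnd ^ k * f * coordProj c := by
  have hw : f (single c 1) ≠ 0 := fun h => hf (by simp [mul_coordProj_eq_smulRight, h])
  intro k k' h
  exact injective_shiftEnd_pow_apply hw (by simpa [coordProj] using congr($h (single c 1)))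

end CoordinateEndomorphisms

theorem end_locallyCompact_discrete_general (p : ℕ)
    (t : TopologicalSpace (Module.End (ZMod p) (ℕ →₀ ZMod p)))
    (htr : @IsTopologicalRing (Module.End (ZMod p) (ℕ →₀ ZMod p)) t _)
    (ht2 : @T2Space (Module.End (ZMod p) (ℕ →₀ ZMod p)) t)
    (hlc : @LocallyCompactSpace (Module.End (ZMod p) (ℕ →₀ ZMod p)) t) :
    @DiscreteTopology (Module.End (ZMod p) (ℕ →₀ ZMod p)) t := by
  have : Countable (ZMod p) := by cases p <;> dsimp [ZMod] <;> infer_instance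
  exact discreteTopology_of_injective_shift shiftEnd
    (fun c => (isIdempotentElem_coordProj c).isOpen_setOf_mul_eq_zero
      (countable_range_mul_coordProj c))
    (fun _ => eq_zero_of_forall_mul_coordProj_eq_zero)
    (fun _ _ => injective_shiftEnd_pow_mul_mul_coordProj)

/-- The endomorphism ring of a countable elementary abelian `p`-group does not
admit a nondiscrete Hausdorff locally compact ring topology: every Hausdorff
locally compact ring topology on it is discrete. -/
theorem end_locallyCompact_discrete (p : ℕ) [Fact p.Prime]
    (t : TopologicalSpace (Module.End (ZMod p) (ℕ →₀ ZMod p)))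
    (htr : @IsTopologicalRing (Module.End (ZMod p) (ℕ →₀ ZMod p)) t _)
    (ht2 : @T2Space (Module.End (ZMod p) (ℕ →₀ ZMod p)) t)
    (hlc : @LocallyCompactSpace (Module.End (ZMod p) (ℕ →₀ ZMod p)) t) :
    @DiscreteTopology (Module.End (ZMod p) (ℕ →₀ ZMod p)) t :=
  end_locallyCompact_discrete_general p t htr ht2 hlc
end

section
/- The quotient ring End(A)/I contains a family of cardinality continuum of nonzero pairwise orthogonal idempotents: there is a set E ⊆ End(A)/I with #E = 𝔠 such that every e ∈ E satisfies e ≠ 0 and e·e = e, and e·f = 0 for all distinct e, f ∈ E. -/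
/-! The coordinate projections `P_S` (`S ⊆ ℕ`) of `ℕ →₀ ZMod p` satisfy `P_S P_T = P_{S ∩ T}`, and,
`ZMod p` being finite and nontrivial, `P_S` has finite image exactly when `S` is finite. Hence the
classes of `P_S` for an almost disjoint family of infinite sets `S` are nonzero orthogonal
idempotents of `End(A)/I`, distinct sets giving distinct classes. The sets of codes of the finite
prefixes of the binary sequences form such a family of size `𝔠`: two distinct sequences share only
the prefixes shorter than their first disagreement. -/

/-- The two-sided ideal of finite-image endomorphisms of the countable elementary
abelian `p`-group `ℕ →₀ ZMod p`. -/
noncomputable def finRangeTwoSidedIdeal (p : ℕ) : TwoSidedIdeal (Module.End (ZMod p) (ℕ →₀ ZMod p)) :=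
  TwoSidedIdeal.mk'
    {α : Module.End (ZMod p) (ℕ →₀ ZMod p) | (Set.range α).Finite}
    ((Set.finite_singleton 0).subset (by rintro _ ⟨x, rfl⟩; simp))
    (fun {a b} ha hb => (Set.Finite.image2 (· + ·) ha hb).subset
      (by rintro _ ⟨x, rfl⟩
          exact Set.mem_image2_of_mem ⟨x, rfl⟩ ⟨x, rfl⟩))
    (fun {a} ha => (ha.image Neg.neg).subset
      (by rintro _ ⟨x, rfl⟩; exact ⟨a x, ⟨x, rfl⟩, rfl⟩))
    (fun {x y} hy => (hy.image x).subset
      (by rintro _ ⟨m, rfl⟩; exact ⟨y m, ⟨m, rfl⟩, rfl⟩))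
    (fun {x y} hx => hx.subset (by rintro _ ⟨m, rfl⟩; exact ⟨y m, rfl⟩))

open Set Function Finsupp

namespace Finsupp

variable (R M : Type*) {α : Type*} [Semiring R] [AddCommMonoid M] [Module R M]

open Classical in
noncomputable def coordProj (s : Set α) : Module.End R (α →₀ M) where
  toFun f := f.filter (· ∈ s)
  map_add' _ _ := filter_add
  map_smul' _ _ := filter_smul

variable {R M}

open Classical in
theorem coordProj_apply (s : Set α) (f : α →₀ M) (a : α) :
    coordProj R M s f a = if a ∈ s then f a else 0 :=
  rfl

theorem coordProj_mul (s t : Set α) :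
    coordProj R M s * coordProj R M t = coordProj R M (s ∩ t) := by
  refine LinearMap.ext fun f => Finsupp.ext fun a => ?_
  simp only [Module.End.mul_apply, coordProj_apply, mem_inter_iff]
  split_ifs <;> simp_all

open Classical in
theorem coordProj_single (s : Set α) (a : α) (m : M) :
    coordProj R M s (single a m) = if a ∈ s then single a m else 0 := by
  split_ifs with ha
  exacts [filter_single_of_pos _ ha, filter_single_of_neg _ ha]

theorem finite_range_coordProj [Finite M] {s : Set α} (hs : s.Finite) :
    (range (coordProj R M s)).Finite := by
  have := hs.to_subtype
  refine Finite.of_finite_image (f := fun g (a : s) => g a) (toFinite _) ?_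
  rintro _ ⟨f, rfl⟩ _ ⟨g, rfl⟩ hfg
  ext a
  by_cases ha : a ∈ s
  · exact congrFun hfg ⟨a, ha⟩
  · simp only [coordProj_apply, if_neg ha]

theorem infinite_range_of_map_single_eq {f : Module.End R (α →₀ M)} {s : Set α} (hs : s.Infinite)
    {m : M} (hm : m ≠ 0) (hf : ∀ a ∈ s, f (single a m) = single a m) :
    (range f).Infinite := by
  refine (hs.image (single_left_injective hm).injOn).mono ?_
  rintro _ ⟨a, ha, rfl⟩
  exact ⟨_, hf a ha⟩

end Finsupp

section PrefixCodes

variable {β : Type*} [Encodable β]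

def prefixCodes (x : ℕ → β) : Set ℕ :=
  range fun n => Encodable.encode (List.ofFn fun i : Fin n => x i)

theorem prefixCodes_infinite (x : ℕ → β) : (prefixCodes x).Infinite :=
  infinite_range_of_injective fun n m h => by
    simpa using congrArg List.length (Encodable.encode_injective h)

theorem finite_prefixCodes_inter {x y : ℕ → β} (hxy : x ≠ y) :
    (prefixCodes x ∩ prefixCodes y).Finite := by
  obtain ⟨N, hN⟩ := Function.ne_iff.mp hxy
  refine ((finite_Iic N).image fun n => Encodable.encode (List.ofFn fun i : Fin n => x i)).subset ?_
  rintro _ ⟨⟨n, rfl⟩, ⟨m, hm⟩⟩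
  have hprefix := Encodable.encode_injective hm
  obtain rfl : m = n := by simpa using congrArg List.length hprefix
  refine ⟨m, mem_Iic.mpr (not_lt.mp fun hNm => hN ?_), rfl⟩
  exact (congrFun (List.ofFn_inj.mp hprefix) ⟨N, hNm⟩).symm

end PrefixCodes

section FiniteRangeQuotient

variable {p : ℕ}

theorem finRangeQuotient_mk_eq_mk_iff (α β : Module.End (ZMod p) (ℕ →₀ ZMod p)) :
    (α : (finRangeTwoSidedIdeal p).ringCon.Quotient) = β ↔ (range (α - β)).Finite := by
  rw [RingCon.eq, TwoSidedIdeal.rel_iff, finRangeTwoSidedIdeal, TwoSidedIdeal.mem_mk']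
  rfl

theorem finRangeQuotient_mk_eq_zero_iff (α : Module.End (ZMod p) (ℕ →₀ ZMod p)) :
    (α : (finRangeTwoSidedIdeal p).ringCon.Quotient) = 0 ↔ (range α).Finite := by
  -- a bare `rw [sub_zero]` does not find `α - 0` through the `Module.End` instances
  rw [← RingCon.coe_zero, finRangeQuotient_mk_eq_mk_iff, show α - 0 = α from sub_zero α]

variable [Fact (1 < p)]

theorem finRangeQuotient_coordProj_ne {s t : Set ℕ} (hst : (s \ t).Infinite) :
    (coordProj (ZMod p) (ZMod p) s : (finRangeTwoSidedIdeal p).ringCon.Quotient) ≠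
      coordProj (ZMod p) (ZMod p) t := by
  rw [Ne, finRangeQuotient_mk_eq_mk_iff]
  refine infinite_range_of_map_single_eq hst one_ne_zero fun a ha => ?_
  rw [LinearMap.sub_apply, coordProj_single, coordProj_single, if_pos ha.1, if_neg ha.2, sub_zero]

theorem finRangeQuotient_coordProj_ne_zero {s : Set ℕ} (hs : s.Infinite) :
    (coordProj (ZMod p) (ZMod p) s : (finRangeTwoSidedIdeal p).ringCon.Quotient) ≠ 0 := by
  rw [Ne, finRangeQuotient_mk_eq_zero_iff]
  exact infinite_range_of_map_single_eq hs one_ne_zero fun a ha => by rw [coordProj_single, if_pos ha]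

theorem finRangeQuotient_coordProj_eq_zero {s : Set ℕ} (hs : s.Finite) :
    (coordProj (ZMod p) (ZMod p) s : (finRangeTwoSidedIdeal p).ringCon.Quotient) = 0 :=
  (finRangeQuotient_mk_eq_zero_iff _).mpr (finite_range_coordProj hs)

theorem exists_orthogonal_idempotents_of_almost_disjoint {ι : Type} (A : ι → Set ℕ)
    (hA : ∀ i, (A i).Infinite) (hAA : Pairwise fun i j => (A i ∩ A j).Finite) :
    ∃ E : Set ((finRangeTwoSidedIdeal p).ringCon.Quotient),
      Cardinal.mk E = Cardinal.mk ι ∧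
      (∀ e ∈ E, e ≠ 0 ∧ e * e = e) ∧
      (∀ e ∈ E, ∀ f ∈ E, e ≠ f → e * f = 0) := by
  let e (i : ι) : (finRangeTwoSidedIdeal p).ringCon.Quotient := coordProj (ZMod p) (ZMod p) (A i)
  have e_mul (i j : ι) : e i * e j = coordProj (ZMod p) (ZMod p) (A i ∩ A j) := by
    rw [← RingCon.coe_mul, coordProj_mul]
  have e_injective : Injective e := fun i j hij => by_contra fun hne =>
    finRangeQuotient_coordProj_ne (by simpa only [sdiff_self_inter] using (hA i).sdiff (hAA hne)) hij
  refine ⟨range e, Cardinal.mk_range_eq e e_injective, ?_, ?_⟩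
  · rintro _ ⟨i, rfl⟩
    exact ⟨finRangeQuotient_coordProj_ne_zero (hA i), by rw [e_mul, inter_self]⟩
  · rintro _ ⟨i, rfl⟩ _ ⟨j, rfl⟩ hij
    rw [e_mul]
    exact finRangeQuotient_coordProj_eq_zero (hAA (ne_of_apply_ne e hij))

end FiniteRangeQuotient

/-- The simple quotient ring `End(A)/I` of the endomorphism ring of a countable
elementary abelian `p`-group by the ideal of finite-image endomorphisms contains
a family of cardinality continuum of nonzero pairwise orthogonal idempotents. -/
theorem quotient_has_continuum_orthogonal_idempotents (p : ℕ) [Fact p.Prime] :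
    ∃ E : Set ((finRangeTwoSidedIdeal p).ringCon.Quotient),
      Cardinal.mk E = Cardinal.continuum ∧
      (∀ e ∈ E, e ≠ 0 ∧ e * e = e) ∧
      (∀ e ∈ E, ∀ f ∈ E, e ≠ f → e * f = 0) := by
  obtain ⟨E, hE, hidem⟩ := exists_orthogonal_idempotents_of_almost_disjoint (p := p)
    (prefixCodes : (ℕ → Bool) → Set ℕ) prefixCodes_infinite fun _ _ => finite_prefixCodes_inter
  exact ⟨E, hE.trans (by simp), hidem⟩
end

section
/- Let A be a nontrivial right vector space over a division ring F and let S = End(A_F) be its ring of F-linear endomorphisms equipped with the finite topology 𝒯_fin. Then (S, 𝒯_fin) is a completely simple topological ring if and only if either the dimension of A over F is infinite, or the dimension of A over F is finite and F does not admit a nondiscrete Hausdorff ring topology (every Hausdorff ring topology on F is discrete). -/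
/-- The finite topology (topology of pointwise convergence) on the endomorphism
ring of a module `M` over `R`: the topology induced by the inclusion
`End(M) → (M → M)` where `M` carries the discrete topology. -/
def moduleEndFinTop (R M : Type*) [Semiring R] [AddCommMonoid M] [Module R M] :
    TopologicalSpace (Module.End R M) :=
  TopologicalSpace.induced (fun α : Module.End R M => (α : M → M))
    (@Pi.topologicalSpace _ _ (fun _ => ⊥))

/-- A ring `S` with a topology `t` is weakly simple if `S·S ≠ 0` and every
`t`-closed two-sided ideal is `0` or `S`. -/
def IsWeaklySimple (S : Type*) [NonUnitalNonAssocRing S] (t : TopologicalSpace S) : Prop :=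
  (∃ a b : S, a * b ≠ 0) ∧
  ∀ J : TwoSidedIdeal S, @IsClosed S t (J : Set S) → J = ⊥ ∨ J = ⊤

/-- A ring topology `t` on `S` is minimal if every Hausdorff ring topology on `S`
coarser than `t` equals `t`. -/
def IsMinimalRingTopology (S : Type*) [NonUnitalNonAssocRing S] (t : TopologicalSpace S) : Prop :=
  ∀ t' : TopologicalSpace S, @IsTopologicalRing S t' _ → @T2Space S t' → t ≤ t' → t' = t

/-- A topological ring is completely simple if it is Hausdorff, weakly simple and
minimal. -/
def IsCompletelySimple (S : Type*) [NonUnitalNonAssocRing S] (t : TopologicalSpace S) : Prop :=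
  @T2Space S t ∧ IsWeaklySimple S t ∧ IsMinimalRingTopology S t

/-!
In finite dimension the finite topology is discrete, so minimality says that every Hausdorff ring
topology on `End(A) ≅ Mₙ(F)ᵐᵒᵖ` is discrete; this passes to and from `F` through the corner
embedding `c ↦ c • E₁₁` and the scalar matrices.

In infinite dimension, let `𝒯` be a Hausdorff ring topology coarser than `𝒯_fin`. If the values
`η v` for `η` in every `𝒯`-neighbourhood of `0` escaped every finite-dimensional subspace, then
rank-one maps killing a finite set would produce `ζ` arbitrarily close to `0` with `ζ v = v`,
which Hausdorffness forbids. The smallest span of such values is then invariant under `End(A)`,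
hence zero, so `{η | η v = 0}` is a `𝒯`-neighbourhood of `0` and `𝒯 = 𝒯_fin`.

Weak simplicity holds because a nonzero ideal contains every finite-rank operator, and these are
dense.
-/

open Filter Topology

section FiniteTopology

variable {R M : Type*} [Semiring R]

theorem moduleEndFinTop_mem_nhds_iff [AddCommMonoid M] [Module R M] {β : Module.End R M}
    {V : Set (Module.End R M)} :
    V ∈ @nhds _ (moduleEndFinTop R M) β ↔ ∃ K : Finset M, {α | ∀ x ∈ K, α x = β x} ⊆ V := by
  let : TopologicalSpace M := ⊥
  have : DiscreteTopology M := ⟨rfl⟩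
  rw [moduleEndFinTop, nhds_induced, mem_comap, nhds_pi]
  constructor
  · rintro ⟨t, ht, htV⟩
    obtain ⟨I, hI, u, hu, hIu⟩ := mem_pi.1 ht
    refine ⟨hI.toFinset, fun α hα => htV (hIu fun x hx => ?_)⟩
    simpa [hα x (hI.mem_toFinset.2 hx)] using mem_of_mem_nhds (hu x)
  · rintro ⟨K, hK⟩
    refine ⟨(K : Set M).pi fun x => {β x}, pi_mem_pi K.finite_toSet fun x _ => ?_,
      fun α hα => hK fun x hx => hα x hx⟩
    simp [nhds_discrete]

variable [AddCommGroup M] [Module R M]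

theorem continuous_apply_moduleEndFinTop (x : M) :
    Continuous[moduleEndFinTop R M, ⊥] fun α : Module.End R M => α x := by
  let : TopologicalSpace M := ⊥
  let := moduleEndFinTop R M
  exact (continuous_apply x).comp continuous_induced_dom

theorem isTopologicalRing_moduleEndFinTop :
    @IsTopologicalRing (Module.End R M) (moduleEndFinTop R M) _ := by
  let : TopologicalSpace M := ⊥
  have : DiscreteTopology M := ⟨rfl⟩
  let := moduleEndFinTop R M
  have : IsTopologicalAddGroup (Module.End R M) := topologicalAddGroup_induced
    (AddMonoidHom.mk' (fun α : Module.End R M => (α : M → M)) fun _ _ => rfl)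
  have : ContinuousMul (Module.End R M) := by
    have hev : Continuous fun p : Module.End R M × M => p.1 p.2 :=
      continuous_prod_of_discrete_right.2 continuous_apply_moduleEndFinTop
    refine ⟨continuous_induced_rng.2 (continuous_pi fun x => ?_)⟩
    exact hev.comp
      (continuous_fst.prodMk ((continuous_apply_moduleEndFinTop x).comp continuous_snd))
  exact { }

theorem t2Space_moduleEndFinTop : @T2Space (Module.End R M) (moduleEndFinTop R M) := by
  let : TopologicalSpace M := ⊥
  have : DiscreteTopology M := ⟨rfl⟩
  let := moduleEndFinTop R M
  exact (IsEmbedding.mk ⟨rfl⟩ DFunLike.coe_injective).t2Space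

theorem moduleEndFinTop_eq_bot [Module.Finite R M] : moduleEndFinTop R M = ⊥ := by
  let := moduleEndFinTop R M
  obtain ⟨s, hs⟩ := Module.Finite.fg_top (R := R) (M := M)
  suffices DiscreteTopology (Module.End R M) from this.eq_bot
  refine discreteTopology_iff_singleton_mem_nhds.2 fun β => moduleEndFinTop_mem_nhds_iff.2 ⟨s, ?_⟩
  exact fun α hα => LinearMap.ext_on hs hα

end FiniteTopology

section VectorSpace

variable {F A : Type*} [DivisionRing F] [AddCommGroup A] [Module F A]

theorem Submodule.exists_dual_le_ker_apply_eq_one {W : Submodule F A} {x : A} (hx : x ∉ W) :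
    ∃ f : Module.Dual F A, W ≤ LinearMap.ker f ∧ f x = 1 := by
  obtain ⟨f, hfx, hW⟩ := W.exists_dual_map_eq_bot_of_notMem hx inferInstance
  refine ⟨f.smulRight (f x)⁻¹, fun w hw => ?_, by simp [hfx]⟩
  have : f w = 0 := by
    simpa [Submodule.map_eq_bot_iff] using hW.le (Submodule.mem_map_of_mem hw)
  simp [this]

variable (F) in
theorem exists_dual_apply_eq_one {x : A} (hx : x ≠ 0) : ∃ f : Module.Dual F A, f x = 1 := by
  obtain ⟨f, -, hf⟩ := (⊥ : Submodule F A).exists_dual_le_ker_apply_eq_one (x := x) (by simpa)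
  exact ⟨f, hf⟩

theorem smulRight_mem_of_mem_of_ne_zero {J : TwoSidedIdeal (Module.End F A)}
    {α : Module.End F A} (hα : α ∈ J) (hα0 : α ≠ 0) (f : Module.Dual F A) (y : A) :
    f.smulRight y ∈ J := by
  obtain ⟨a, ha⟩ := DFunLike.ne_iff.1 hα0
  obtain ⟨g, hg⟩ := exists_dual_apply_eq_one F ha
  have : f.smulRight y = g.smulRight y * α * f.smulRight a := by
    ext x
    simp [hg]
  rw [this]
  exact J.mul_mem_right _ _ (J.mul_mem_left _ _ hα)

theorem TwoSidedIdeal.exists_mem_eqOn_of_ne_bot {J : TwoSidedIdeal (Module.End F A)}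
    (hJ : J ≠ ⊥) (β : Module.End F A) (K : Finset A) : ∃ γ ∈ J, Set.EqOn γ β K := by
  classical
  obtain ⟨α, hα, hα0⟩ : ∃ α ∈ J, α ≠ 0 := by
    by_contra! h
    exact hJ (eq_bot_iff.2 fun α hα => (TwoSidedIdeal.mem_bot _).2 (h α hα))
  induction K using Finset.induction_on with
  | empty => exact ⟨0, J.zero_mem, by simp⟩
  | insert x K _ ih =>
    obtain ⟨γ, hγ, hγβ⟩ := ih
    suffices ∃ γ' ∈ J, Set.EqOn γ' β K ∧ γ' x = β x by
      obtain ⟨γ', hγ', hγ'K, hγ'x⟩ := this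
      refine ⟨γ', hγ', fun y hy => ?_⟩
      rcases Finset.mem_insert.1 hy with rfl | hy
      exacts [hγ'x, hγ'K hy]
    by_cases hx : x ∈ Submodule.span F (K : Set A)
    · exact ⟨γ, hγ, hγβ, LinearMap.eqOn_span hγβ hx⟩
    obtain ⟨f, hKf, hfx⟩ := Submodule.exists_dual_le_ker_apply_eq_one hx
    have hfK : ∀ y ∈ K, f y = 0 := fun y hy => hKf (Submodule.subset_span hy)
    exact ⟨γ + f.smulRight (β x - γ x),
      J.add_mem hγ (smulRight_mem_of_mem_of_ne_zero hα hα0 _ _),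
      fun y hy => by simp [hfK y hy, hγβ hy], by simp [hfx]⟩

theorem isWeaklySimple_moduleEndFinTop [Nontrivial A] :
    IsWeaklySimple (Module.End F A) (moduleEndFinTop F A) := by
  refine ⟨⟨1, 1, by simp⟩, fun J hJ => or_iff_not_imp_left.2 fun hJ0 => J.eq_top ?_⟩
  rw [← SetLike.mem_coe, ← @IsClosed.closure_eq _ (moduleEndFinTop F A) _ hJ]
  refine (@mem_closure_iff_nhds _ (moduleEndFinTop F A) _ _).2 fun V hV => ?_
  obtain ⟨K, hK⟩ := moduleEndFinTop_mem_nhds_iff.1 hV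
  obtain ⟨γ, hγ, hγ1⟩ := J.exists_mem_eqOn_of_ne_bot hJ0 1 K
  exact ⟨γ, hK fun x hx => hγ1 hx, hγ⟩

end VectorSpace
section DiscreteRingTopologies

def HasOnlyDiscreteRingTopologies (R : Type*) [NonUnitalNonAssocRing R] : Prop :=
  ∀ t : TopologicalSpace R, @IsTopologicalRing R t _ → @T2Space R t → @DiscreteTopology R t

theorem isMinimalRingTopology_bot_iff {R : Type*} [NonUnitalNonAssocRing R] :
    IsMinimalRingTopology R ⊥ ↔ HasOnlyDiscreteRingTopologies R :=
  ⟨fun h t ht h2 => ⟨h t ht h2 bot_le⟩, fun h t ht h2 _ => (h t ht h2).eq_bot⟩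

variable {R S : Type*}

theorem HasOnlyDiscreteRingTopologies.discreteTopology_induced [NonUnitalNonAssocRing R]
    [NonUnitalNonAssocRing S] (hR : HasOnlyDiscreteRingTopologies R) (f : R →ₙ+* S)
    (hf : Function.Injective f) (t : TopologicalSpace S) [IsTopologicalRing S] [T2Space S] :
    @DiscreteTopology R (t.induced f) := by
  let := t.induced f
  have : IsTopologicalAddGroup R := topologicalAddGroup_induced (f : R →+ S)
  have : ContinuousMul R := continuousMul_induced (f : R →ₙ* S)
  exact hR _ { } (IsEmbedding.mk ⟨rfl⟩ hf).t2Space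

theorem HasOnlyDiscreteRingTopologies.of_ringEquiv [NonUnitalNonAssocRing R]
    [NonUnitalNonAssocRing S] (hR : HasOnlyDiscreteRingTopologies R) (e : R ≃+* S) :
    HasOnlyDiscreteRingTopologies S := fun t _ _ => by
  let := t.induced e
  have : DiscreteTopology R := hR.discreteTopology_induced e e.injective t
  have he : Continuous e.symm :=
    continuous_induced_rng.2 (by simpa [Function.comp_def] using continuous_id')
  exact .of_continuous_injective he e.symm.injective

theorem RingEquiv.hasOnlyDiscreteRingTopologies_iff [NonUnitalNonAssocRing R]
    [NonUnitalNonAssocRing S] (e : R ≃+* S) :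
    HasOnlyDiscreteRingTopologies R ↔ HasOnlyDiscreteRingTopologies S :=
  ⟨(·.of_ringEquiv e), (·.of_ringEquiv e.symm)⟩

theorem HasOnlyDiscreteRingTopologies.of_mulOpposite [NonUnitalNonAssocRing R]
    (h : HasOnlyDiscreteRingTopologies Rᵐᵒᵖ) : HasOnlyDiscreteRingTopologies R := fun _ _ _ =>
  have := h _ inferInstance inferInstance
  .of_continuous_injective MulOpposite.continuous_op MulOpposite.op_injective

theorem hasOnlyDiscreteRingTopologies_mulOpposite_iff [NonUnitalNonAssocRing R] :
    HasOnlyDiscreteRingTopologies Rᵐᵒᵖ ↔ HasOnlyDiscreteRingTopologies R :=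
  ⟨.of_mulOpposite, fun h => (h.of_ringEquiv (RingEquiv.opOp R)).of_mulOpposite⟩

theorem hasOnlyDiscreteRingTopologies_matrix_iff {n : Type*} [Fintype n] [DecidableEq n]
    [Nonempty n] [Ring R] :
    HasOnlyDiscreteRingTopologies (Matrix n n R) ↔ HasOnlyDiscreteRingTopologies R := by
  refine ⟨fun h t _ _ => ?_, fun h t _ _ => ?_⟩
  · have := h _ inferInstance inferInstance
    exact .of_continuous_injective (continuous_pi fun _ => continuous_id).matrix_diagonal
      (Matrix.diagonal_injective.comp (Function.const_injective (α := n)))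
  · let i : n := Classical.arbitrary n
    let corner : R →ₙ+* Matrix n n R :=
      { toFun := Matrix.single i i
        map_zero' := Matrix.single_zero i i
        map_add' := Matrix.single_add i i
        map_mul' := fun a b => (Matrix.single_mul_single_same (c := a) i i i b).symm }
    have hcorner (a : R) : corner a = Matrix.single i i a := rfl
    obtain ⟨U, hU, hUcorner⟩ := isOpen_induced_iff.1 <|
      @isOpen_discrete R (t.induced corner) (h.discreteTopology_induced corner
        (fun a b hab => by simpa [hcorner] using congr($hab i i)) t) {0}
    have hentry (k l : n) : IsOpen {M : Matrix n n R | M k l = 0} := by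
      have hU' : {M : Matrix n n R | M k l = 0} =
          (fun M => Matrix.single i k 1 * M * Matrix.single l i 1) ⁻¹' U := by
        ext M
        rw [Set.mem_preimage, Matrix.single_mul_mul_single, one_mul, mul_one, ← hcorner,
          ← Set.mem_preimage, hUcorner]
        rfl
      rw [hU']
      exact hU.preimage (by fun_prop)
    have hzero : ({0} : Set (Matrix n n R)) = ⋂ k, ⋂ l, {M : Matrix n n R | M k l = 0} := by
      ext M
      simp [← Matrix.ext_iff]
    refine discreteTopology_of_isOpen_singleton_zero ?_
    rw [hzero]
    exact isOpen_iInter_of_finite fun k => isOpen_iInter_of_finite fun l => hentry k l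

end DiscreteRingTopologies

section FiniteRank

variable {R M : Type*} [Ring R] [AddCommGroup M] [Module R M] [Module.Free R M] [Module.Finite R M]
  [Nontrivial M]

theorem hasOnlyDiscreteRingTopologies_moduleEnd_iff :
    HasOnlyDiscreteRingTopologies (Module.End R M) ↔ HasOnlyDiscreteRingTopologies R := by
  classical
  let b := Module.Free.chooseBasis R M
  have : Nonempty (Module.Free.ChooseBasisIndex R M) := b.index_nonempty
  rw [b.equivFun.conjRingEquiv.hasOnlyDiscreteRingTopologies_iff,
    ← hasOnlyDiscreteRingTopologies_mulOpposite_iff,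
    ← matrixRingEquivEndVecMulOpposite.hasOnlyDiscreteRingTopologies_iff,
    hasOnlyDiscreteRingTopologies_matrix_iff]

theorem isMinimalRingTopology_moduleEndFinTop_iff_of_finite :
    IsMinimalRingTopology (Module.End R M) (moduleEndFinTop R M) ↔
      HasOnlyDiscreteRingTopologies R := by
  rw [moduleEndFinTop_eq_bot, isMinimalRingTopology_bot_iff,
    hasOnlyDiscreteRingTopologies_moduleEnd_iff]

end FiniteRank

section InfiniteRank

variable {F A : Type*} [DivisionRing F] [AddCommGroup A] [Module F A]

theorem Submodule.eq_bot_or_eq_top_of_forall_apply_mem (W : Submodule F A)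
    (hW : ∀ γ : Module.End F A, ∀ w ∈ W, γ w ∈ W) : W = ⊥ ∨ W = ⊤ := by
  refine or_iff_not_imp_left.2 fun hW0 => eq_top_iff.2 fun x _ => ?_
  obtain ⟨w, hw, hw0⟩ := W.ne_bot_iff.1 hW0
  obtain ⟨f, hf⟩ := exists_dual_apply_eq_one F hw0
  simpa [hf] using hW (f.smulRight x) w hw

theorem Filter.exists_mem_forall_le_of_finiteDimensional {X : Type*} {l : Filter X}
    {s : Set X → Submodule F A} (hs : Monotone s) {U₁ : Set X} (hU₁ : U₁ ∈ l)
    [FiniteDimensional F (s U₁)] : ∃ U₀ ∈ l, ∀ U ∈ l, s U₀ ≤ s U := by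
  obtain ⟨U₀, ⟨hU₀, hU₀₁⟩, hmin⟩ := (measure fun U => Module.finrank F (s U)).wf.has_min
    {U | U ∈ l ∧ U ⊆ U₁} ⟨U₁, hU₁, subset_rfl⟩
  have : FiniteDimensional F (s U₀) := Submodule.finiteDimensional_of_le (hs hU₀₁)
  refine ⟨U₀, hU₀, fun U hU => ?_⟩
  have heq : s (U ∩ U₀) = s U₀ := Submodule.eq_of_le_of_finrank_le (hs Set.inter_subset_right)
    (not_lt.1 (hmin _ ⟨inter_mem hU hU₀, Set.inter_subset_right.trans hU₀₁⟩))
  exact heq ▸ hs Set.inter_subset_left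

variable [TopologicalSpace (Module.End F A)] [IsTopologicalRing (Module.End F A)]

/-- For the projection `e` onto `F ∙ v`, `ζ v = v` gives `e * ζ * e = e`, and `e ≠ 0` is
separated from `0`. -/
theorem eventually_apply_ne_self [T1Space (Module.End F A)] {v : A} (hv : v ≠ 0) :
    ∀ᶠ ζ in 𝓝 (0 : Module.End F A), ζ v ≠ v := by
  obtain ⟨f, hf⟩ := exists_dual_apply_eq_one F hv
  let e : Module.End F A := f.smulRight v
  have he : e ≠ 0 := fun h => hv (by simpa [e, hf] using congr($h v))
  have hlim : Tendsto (fun ζ => e * ζ * e) (𝓝 0) (𝓝 0) := by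
    have : Continuous fun ζ => e * ζ * e := by fun_prop
    simpa using this.tendsto 0
  filter_upwards [hlim (compl_singleton_mem_nhds he.symm)] with ζ hζ hζv
  refine hζ ?_
  ext x
  simp [e, hζv, hf]

theorem exists_mem_nhds_forall_apply_mem_span [T1Space (Module.End F A)]
    (hfin : ∀ V ∈ 𝓝 (0 : Module.End F A), ∃ K : Finset A, {α | ∀ x ∈ K, α x = 0} ⊆ V)
    {v : A} (hv : v ≠ 0) :
    ∃ V ∈ 𝓝 (0 : Module.End F A), ∃ K : Finset A,
      ∀ η ∈ V, η v ∈ Submodule.span F (K : Set A) := by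
  obtain ⟨V, hV, hVV⟩ : ∃ V ∈ 𝓝 (0 : Module.End F A), ∀ ξ ∈ V, ∀ η ∈ V, (ξ * η) v ≠ v := by
    have hlim : Tendsto (fun p : Module.End F A × Module.End F A => p.1 * p.2)
        (𝓝 0 ×ˢ 𝓝 0) (𝓝 0) := by
      simpa [← nhds_prod_eq] using continuous_mul.tendsto ((0 : Module.End F A), 0)
    exact eventually_prod_self_iff.1 (hlim.eventually (eventually_apply_ne_self hv))
  obtain ⟨K, hK⟩ := hfin V hV
  refine ⟨V, hV, K, fun η hη => by_contra fun hηK => ?_⟩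
  obtain ⟨f, hKf, hf⟩ := Submodule.exists_dual_le_ker_apply_eq_one hηK
  have hξ : f.smulRight v ∈ V :=
    hK fun x hx => by simp [LinearMap.mem_ker.1 (hKf (Submodule.subset_span hx))]
  exact hVV _ hξ η hη (by simp [hf])

theorem eventually_apply_eq_zero_of_finiteDimensional (hA : ¬ Module.Finite F A) {v : A}
    {V₁ : Set (Module.End F A)} (hV₁ : V₁ ∈ 𝓝 0)
    [FiniteDimensional F (Submodule.span F ((fun η : Module.End F A => η v) '' V₁))] :
    ∀ᶠ η in 𝓝 (0 : Module.End F A), η v = 0 := by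
  let s (V : Set (Module.End F A)) : Submodule F A := Submodule.span F ((fun η => η v) '' V)
  obtain ⟨U₀, hU₀, hmin⟩ := exists_mem_forall_le_of_finiteDimensional (s := s)
    (fun _ _ h => Submodule.span_mono (Set.image_mono h)) hV₁
  have hinv (γ : Module.End F A) : ∀ w ∈ s U₀, γ w ∈ s U₀ := by
    have hV : (γ * ·) ⁻¹' U₀ ∈ 𝓝 0 := (continuous_const_mul γ).tendsto' 0 0 (mul_zero γ) hU₀
    have hmap : (s ((γ * ·) ⁻¹' U₀)).map γ ≤ s U₀ := by
      rw [Submodule.map_span]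
      refine Submodule.span_mono ?_
      rintro _ ⟨_, ⟨η, hη, rfl⟩, rfl⟩
      exact ⟨γ * η, hη, rfl⟩
    exact fun w hw => hmap (Submodule.mem_map_of_mem (hmin _ hV hw))
  rcases (s U₀).eq_bot_or_eq_top_of_forall_apply_mem hinv with h | h
  · filter_upwards [hU₀] with η hη
    exact (Submodule.mem_bot F).1 (h ▸ Submodule.subset_span ⟨η, hη, rfl⟩)
  · have : FiniteDimensional F (s U₀) := Submodule.finiteDimensional_of_le (hmin _ hV₁)
    rw [h] at this
    exact absurd (Module.Finite.equiv Submodule.topEquiv) hA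

end InfiniteRank

theorem isMinimalRingTopology_moduleEndFinTop_of_not_finite {F A : Type*} [DivisionRing F]
    [AddCommGroup A] [Module F A] (hA : ¬ Module.Finite F A) :
    IsMinimalRingTopology (Module.End F A) (moduleEndFinTop F A) := by
  intro t _ _ hle
  have hfin (V) (hV : V ∈ 𝓝 (0 : Module.End F A)) :
      ∃ K : Finset A, {α : Module.End F A | ∀ x ∈ K, α x = 0} ⊆ V :=
    moduleEndFinTop_mem_nhds_iff.1 (nhds_mono hle hV)
  have hzero (v : A) : ∀ᶠ η in 𝓝 (0 : Module.End F A), η v = 0 := by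
    rcases eq_or_ne v 0 with rfl | hv
    · simp
    obtain ⟨V, hV, K, hVK⟩ := exists_mem_nhds_forall_apply_mem_span hfin hv
    have : FiniteDimensional F (Submodule.span F ((fun η : Module.End F A => η v) '' V)) :=
      Submodule.finiteDimensional_of_le (Submodule.span_le.2 (Set.image_subset_iff.2 hVK))
    exact eventually_apply_eq_zero_of_finiteDimensional hA hV
  have := @IsTopologicalRing.to_topologicalAddGroup _ _ (moduleEndFinTop F A)
    isTopologicalRing_moduleEndFinTop
  refine IsTopologicalAddGroup.ext inferInstance this
    (le_antisymm (fun V hV => ?_) (nhds_mono hle))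
  obtain ⟨K, hK⟩ := moduleEndFinTop_mem_nhds_iff.1 hV
  filter_upwards [(eventually_all_finset K).2 fun x _ => hzero x] with α hα
  exact hK fun x hx => hα x hx

/-- For a nontrivial vector space `A` over a division ring `F`, the endomorphism
ring of `A` with the finite topology is completely simple iff either `A` is
infinite dimensional, or `A` is finite dimensional and `F` admits no nondiscrete
Hausdorff ring topology. -/
theorem end_completelySimple_iff {F A : Type*} [DivisionRing F] [AddCommGroup A]
    [Module F A] [Nontrivial A] :
    IsCompletelySimple (Module.End F A) (moduleEndFinTop F A) ↔
      (Cardinal.aleph0 ≤ Module.rank F A ∨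
        (Module.rank F A < Cardinal.aleph0 ∧
          ∀ t : TopologicalSpace F, @IsTopologicalRing F t _ → @T2Space F t →
            @DiscreteTopology F t)) := by
  have hCS : IsCompletelySimple (Module.End F A) (moduleEndFinTop F A) ↔
      IsMinimalRingTopology (Module.End F A) (moduleEndFinTop F A) :=
    ⟨fun h => h.2.2, fun h => ⟨t2Space_moduleEndFinTop, isWeaklySimple_moduleEndFinTop, h⟩⟩
  rw [hCS, ← not_lt, Module.rank_lt_aleph0_iff]
  by_cases hA : Module.Finite F A
  · simp only [hA, not_true_eq_false, false_or, true_and]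
    exact isMinimalRingTopology_moduleEndFinTop_iff_of_finite
  · simp only [hA, not_false_eq_true, true_or, iff_true]
    exact isMinimalRingTopology_moduleEndFinTop_of_not_finite hA
end

section
/- Let A be an infinite-dimensional right vector space over a division ring F and let S = End(A_F) be its ring of F-linear endomorphisms equipped with the finite topology 𝒯_fin. Then (S, 𝒯_fin) is a minimal topological ring: every Hausdorff ring topology on S coarser than 𝒯_fin equals 𝒯_fin. -/
open Filter Topology Module

theorem Module.End.mul_smulRight {R M : Type*} [Semiring R] [AddCommMonoid M] [Module R M]
    (α : Module.End R M) (f : M →ₗ[R] R) (x : M) :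
    α * f.smulRight x = f.smulRight (α x) := by
  ext; simp

theorem moduleEndFinTop_nhds_hasBasis (R M : Type*) [Semiring R] [AddCommMonoid M] [Module R M]
    (α : Module.End R M) :
    (@nhds _ (moduleEndFinTop R M) α).HasBasis (fun I : Set M => I.Finite)
      (fun I => {β | ∀ k ∈ I, β k = α k}) := by
  let _ : TopologicalSpace M := ⊥
  have : DiscreteTopology M := ⟨rfl⟩
  refine ⟨fun U => ?_⟩
  rw [moduleEndFinTop, nhds_induced, nhds_pi]
  simp only [nhds_discrete, ← principal_singleton, mem_comap, mem_pi_principal]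
  constructor
  · rintro ⟨V, ⟨I, hI, hIV⟩, hVU⟩
    exact ⟨I, hI, fun β hβ => hVU (hIV fun k hk => hβ k hk)⟩
  · rintro ⟨I, hI, hIU⟩
    exact ⟨_, ⟨I, hI, subset_rfl⟩, fun β hβ => hIU fun k hk => hβ k hk⟩

theorem Submodule.exists_end_comap_eq_bot {F A : Type*} [DivisionRing F] [AddCommGroup A]
    [Module F A] (h : Cardinal.aleph0 ≤ Module.rank F A) (B : Submodule F A) [Module.Finite F B] :
    ∃ g : Module.End F A, B.comap g = ⊥ := by
  obtain ⟨C, hBC⟩ := B.exists_isCompl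
  have hB : Module.rank F B < Cardinal.aleph0 := Module.rank_lt_aleph0 F B
  have hsum := rank_quotient_add_rank_of_divisionRing B
  have hquot : Cardinal.aleph0 ≤ Module.rank F (A ⧸ B) := by
    by_contra! hlt
    exact (Cardinal.add_lt_aleph0 hlt hB).not_ge (hsum ▸ h)
  obtain ⟨eqv⟩ := nonempty_linearEquiv_of_rank_eq
    (hsum.symm.trans (Cardinal.add_eq_left hquot (hB.le.trans hquot)))
  refine ⟨C.subtype ∘ₗ (B.quotientEquivOfIsCompl C hBC).toLinearMap ∘ₗ eqv.toLinearMap,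
    (Submodule.eq_bot_iff _).2 fun c hc => ?_⟩
  have hzero : _ = (0 : A) := Submodule.disjoint_def.1 hBC.disjoint _ hc (Submodule.coe_mem _)
  rwa [LinearMap.comp_apply, LinearMap.comp_apply, Submodule.subtype_apply,
    ZeroMemClass.coe_eq_zero, LinearEquiv.coe_coe, LinearEquiv.map_eq_zero_iff, LinearEquiv.coe_coe,
    LinearEquiv.map_eq_zero_iff] at hzero

theorem exists_mem_nhds_zero_mul_ne {S : Type*} [MulZeroClass S] [TopologicalSpace S]
    [ContinuousMul S] [T1Space S] {e : S} (he : e ≠ 0) :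
    ∃ U ∈ 𝓝 (0 : S), ∀ x ∈ U, ∀ y ∈ U, x * y ≠ e := by
  have : {p : S × S | p.1 * p.2 ≠ e} ∈ 𝓝 (0 : S) ×ˢ 𝓝 0 := by
    rw [← nhds_prod_eq]
    exact continuous_mul.continuousAt.preimage_mem_nhds
      (isOpen_ne.mem_nhds (by simpa using he.symm))
  obtain ⟨U, hU, hUU⟩ := mem_prod_self_iff.1 this
  exact ⟨U, hU, fun x hx y hy => hUU (Set.mk_mem_prod hx hy)⟩

section HausdorffRingTopology

variable {F A : Type*} [DivisionRing F] [AddCommGroup A] [Module F A]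
  [TopologicalSpace (Module.End F A)] [IsTopologicalRing (Module.End F A)]
  [T2Space (Module.End F A)]

theorem setOf_apply_eq_zero_mem_nhds_zero (h : Cardinal.aleph0 ≤ Module.rank F A)
    (hcoarser : moduleEndFinTop F A ≤ ‹TopologicalSpace (Module.End F A)›) (a : A) :
    {α : Module.End F A | α a = 0} ∈ 𝓝 0 := by
  rcases eq_or_ne a 0 with rfl | ha
  · simp
  obtain ⟨φ, hφa⟩ := Projective.exists_dual_ne_zero F ha
  set e : Module.End F A := φ.smulRight a
  have he : e ≠ 0 := fun he0 => smul_ne_zero hφa ha (LinearMap.congr_fun he0 a)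
  obtain ⟨U, hU, hUe⟩ := exists_mem_nhds_zero_mul_ne he
  obtain ⟨I, hI, hIU⟩ := (moduleEndFinTop_nhds_hasBasis F A 0).mem_iff.1 (nhds_mono hcoarser hU)
  have : Module.Finite F (Submodule.span F I) := Module.Finite.span_of_finite F hI
  obtain ⟨g, hg⟩ := (Submodule.span F I).exists_end_comap_eq_bot h
  have hW : {α | g * α * e ∈ U} ∈ 𝓝 (0 : Module.End F A) :=
    ((continuous_const.mul continuous_id).mul continuous_const).continuousAt.preimage_mem_nhds
      (by simpa using hU)
  filter_upwards [hW] with α hα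
  by_contra hαa
  have hgα : g (α a) ∉ Submodule.span F I := fun hmem =>
    hαa ((Submodule.mem_bot F).1 (hg ▸ hmem))
  obtain ⟨ψ, hψ, hψI⟩ := Submodule.exists_dual_map_eq_bot_of_notMem hgα inferInstance
  have hσ : ψ.smulRight ((ψ (g (α a)))⁻¹ • a) ∈ U := hIU fun k hk => by
    have hψk : ψ k = 0 := LinearMap.le_ker_iff_map.2 hψI (Submodule.subset_span hk)
    simp [hψk]
  refine hUe _ hσ _ hα ?_
  rw [Module.End.mul_smulRight, Module.End.mul_smulRight, LinearMap.smulRight_apply,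
    Module.End.mul_apply, smul_smul, mul_inv_cancel₀ hψ, one_smul]

end HausdorffRingTopology

/-- The endomorphism ring of an infinite-dimensional vector space over a division
ring, equipped with the finite topology, is a minimal topological ring: every
Hausdorff ring topology coarser than the finite topology equals it. -/
theorem end_finTop_minimal {F A : Type*} [DivisionRing F] [AddCommGroup A]
    [Module F A] (h : Cardinal.aleph0 ≤ Module.rank F A)
    (t' : TopologicalSpace (Module.End F A))
    (htr : @IsTopologicalRing (Module.End F A) t' _)
    (ht2 : @T2Space (Module.End F A) t')
    (hcoarser : moduleEndFinTop F A ≤ t') :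
    t' = moduleEndFinTop F A := by
  refine le_antisymm ((le_iff_nhds _ _).2 fun α => ?_) hcoarser
  refine (moduleEndFinTop_nhds_hasBasis F A α).ge_iff.2 fun I hI => ?_
  have hI0 : {β : Module.End F A | ∀ k ∈ I, β k = 0} ∈ 𝓝 0 := by
    simpa only [Set.ofPred_forall] using
      (biInter_mem hI).2 fun k _ => setOf_apply_eq_zero_mem_nhds_zero h hcoarser k
  have hsub : Tendsto (· - α) (𝓝 α) (𝓝 0) := by
    simpa using (continuous_sub_right α).tendsto α
  filter_upwards [hsub hI0] with β hβ k hk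
  exact sub_eq_zero.1 (hβ k hk)
end

section
/- Let R be a commutative ring with identity and M a unitary R-module such that the topological ring (End(M_R), 𝒯_fin) is weakly simple. Then P = {r ∈ R : r • m = 0 for all m ∈ M} (the annihilator of M) is a prime ideal of R. -/
/-- If the endomorphism ring of a module `M` over a commutative ring `R`, with
the finite topology, is weakly simple, then the annihilator
`P = {r : R | ∀ m : M, r • m = 0}` of `M` is a prime ideal of `R`. -/
theorem annihilator_isPrime_of_weaklySimple {R : Type*} [CommRing R]
    {M : Type*} [AddCommGroup M] [Module R M]
    (hws : IsWeaklySimple (Module.End R M) (moduleEndFinTop R M)) :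
    ∃ P : Ideal R, (∀ r : R, r ∈ P ↔ ∀ m : M, r • m = 0) ∧ P.IsPrime := by
  obtain ⟨⟨a0, b0, hab0⟩, hclosed⟩ := hws
  refine ⟨Module.annihilator R M, fun r => Module.mem_annihilator, ?_, ?_⟩
  · -- P ≠ ⊤
    intro h
    have hM : ∀ m : M, m = 0 := fun m => by
      have := Module.mem_annihilator.mp
        (h ▸ Submodule.mem_top : (1 : R) ∈ Module.annihilator R M) m
      simpa using this
    exact hab0 (LinearMap.ext fun m => by simp [hM])
  · intro a b hab
    rw [or_iff_not_imp_left]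
    intro ha
    have ha' : ∃ m : M, a • m ≠ 0 := by
      by_contra h
      push_neg at h
      exact ha (Module.mem_annihilator.mpr h)
    -- the two-sided ideal J = {f | ∀ m, a • f m = 0}
    set s : Set (Module.End R M) := {f | ∀ m : M, a • f m = 0} with hs
    have zero_mem : (0 : Module.End R M) ∈ s := fun m => by simp
    have add_mem : ∀ {x y : Module.End R M}, x ∈ s → y ∈ s → x + y ∈ s := by
      intro x y hx hy m
      simp [smul_add, hx m, hy m]
    have neg_mem : ∀ {x : Module.End R M}, x ∈ s → -x ∈ s := by
      intro x hx m
      simp [hx m]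
    have mul_mem_left : ∀ {x y : Module.End R M}, y ∈ s → x * y ∈ s := by
      intro x y hy m
      have : a • x (y m) = x (a • y m) := (map_smul x a (y m)).symm
      simp [Module.End.mul_apply, this, hy m]
    have mul_mem_right : ∀ {x y : Module.End R M}, x ∈ s → x * y ∈ s := by
      intro x y hx m
      simpa [Module.End.mul_apply] using hx (y m)
    set J : TwoSidedIdeal (Module.End R M) :=
      TwoSidedIdeal.mk' s zero_mem add_mem neg_mem mul_mem_left mul_mem_right with hJ
    have hJcoe : (J : Set (Module.End R M)) = s := TwoSidedIdeal.coe_mk' _ _ _ _ _ _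
    have hJclosed : @IsClosed _ (moduleEndFinTop R M) (J : Set (Module.End R M)) := by
      rw [hJcoe]
      letI : TopologicalSpace M := ⊥
      haveI : DiscreteTopology M := ⟨rfl⟩
      letI : TopologicalSpace (Module.End R M) := moduleEndFinTop R M
      have : s = ⋂ m : M, (fun f : Module.End R M => f m) ⁻¹' {x | a • x = 0} := by
        ext f; simp [hs, Set.mem_iInter]
      rw [this]
      refine isClosed_iInter fun m => IsClosed.preimage ?_ (isClosed_discrete _)
      exact (continuous_apply m).comp continuous_induced_dom
    rcases hclosed J hJclosed with hbot | htop
    · -- then b • 1 ∈ J = ⊥, so b annihilates M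
      have hbJ : (b • 1 : Module.End R M) ∈ J := by
        rw [hJ, TwoSidedIdeal.mem_mk']
        intro m
        have : a • (b • m) = (a * b) • m := smul_smul a b m
        have hab' : (a * b) • m = 0 := Module.mem_annihilator.mp hab m
        simp [this, hab']
      rw [hbot, TwoSidedIdeal.mem_bot] at hbJ
      refine Module.mem_annihilator.mpr fun m => ?_
      have := congrArg (fun f : Module.End R M => f m) hbJ
      simpa using this
    · -- J = ⊤ contradicts a ∉ P
      exfalso
      obtain ⟨m, hm⟩ := ha'
      have h1 : (1 : Module.End R M) ∈ J := htop ▸ TwoSidedIdeal.mem_top _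
      rw [hJ, TwoSidedIdeal.mem_mk'] at h1
      exact hm (by simpa using h1 m)
end

section
/- Let R be a commutative ring with identity and M a unitary R-module such that the topological ring (End(M_R), 𝒯_fin) is weakly simple, and let P = {r ∈ R : r • m = 0 for all m ∈ M}. Then M is torsion-free and divisible over R modulo P: for every r ∈ R with r ∉ P, one has (a) r • m ≠ 0 for every nonzero m ∈ M, and (b) for every m ∈ M there exists x ∈ M with r • x = m. -/
/-- Any "pointwise" condition set is closed in the finite topology. -/
lemma finTop_closed_of_pointwise {R M : Type*} [Semiring R] [AddCommMonoid M] [Module R M]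
    (C : M → Set M) :
    @IsClosed _ (moduleEndFinTop R M) {α : Module.End R M | ∀ m, α m ∈ C m} := by
  letI t : TopologicalSpace (Module.End R M) := moduleEndFinTop R M
  letI : TopologicalSpace M := ⊥
  haveI : DiscreteTopology M := ⟨rfl⟩
  have hc : ∀ m : M, Continuous (fun α : Module.End R M => α m) := by
    intro m
    exact (continuous_apply m).comp continuous_induced_dom
  have : {α : Module.End R M | ∀ m, α m ∈ C m}
      = ⋂ m, (fun α : Module.End R M => α m) ⁻¹' (C m) := by
    ext α; simp
  rw [this]
  exact isClosed_iInter fun m => (isClosed_discrete (C m)).preimage (hc m)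

/-- If the endomorphism ring of a module `M` over a commutative ring `R`, with
the finite topology, is weakly simple, and `P = {r : R | ∀ m : M, r • m = 0}` is
the annihilator of `M`, then `M` is torsion-free and divisible modulo `P`: every
`r ∉ P` acts injectively (nonzero on nonzero elements) and surjectively on `M`. -/
theorem torsionFree_divisible_of_weaklySimple {R : Type*} [CommRing R]
    {M : Type*} [AddCommGroup M] [Module R M]
    (hws : IsWeaklySimple (Module.End R M) (moduleEndFinTop R M)) :
    ∀ r : R, ¬ (∀ m : M, r • m = 0) →
      (∀ m : M, m ≠ 0 → r • m ≠ 0) ∧ (∀ m : M, ∃ x : M, r • x = m) := by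
  intro r hr
  -- the scalar endomorphism r • id
  set ρ : Module.End R M := r • (LinearMap.id : M →ₗ[R] M) with hρ
  have hρne : ρ ≠ 0 := by
    intro h
    apply hr
    intro m
    have := congrArg (fun f : Module.End R M => f m) h
    simpa [hρ] using this
  constructor
  · -- torsion-free: ideal of endomorphisms vanishing on ker(r•)
    set K : TwoSidedIdeal (Module.End R M) := TwoSidedIdeal.mk'
      {α : Module.End R M | ∀ m, r • m = 0 → α m = 0}
      (by intro m _; rfl)
      (by intro x y hx hy m hm; simp [hx m hm, hy m hm])
      (by intro x hx m hm; simp [hx m hm])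
      (by intro x y hy m hm
          show x (y m) = 0
          rw [hy m hm, map_zero])
      (by intro x y hx m hm
          show x (y m) = 0
          apply hx
          rw [← map_smul, hm, map_zero]) with hK
    have hKmem : ∀ α : Module.End R M,
        α ∈ K ↔ ∀ m, r • m = 0 → α m = 0 := fun α =>
      TwoSidedIdeal.mem_mk' _ _ _ _ _ _ α
    have hKclosed : @IsClosed _ (moduleEndFinTop R M) (K : Set (Module.End R M)) := by
      have : (K : Set (Module.End R M))
          = {α : Module.End R M | ∀ m, α m ∈ {y : M | r • m = 0 → y = 0}} := by
        ext α
        simp only [SetLike.mem_coe, hKmem, Set.mem_setOf_eq]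
      rw [this]
      exact finTop_closed_of_pointwise _
    have hρK : ρ ∈ K := by
      rw [hKmem]
      intro m hm
      simpa [hρ] using hm
    rcases hws.2 K hKclosed with h | h
    · exact absurd (by rw [h] at hρK; simpa using hρK) hρne
    · intro m hm hrm
      have h1 : (1 : Module.End R M) ∈ K := h ▸ TwoSidedIdeal.mem_top _
      exact hm ((hKmem 1).1 h1 m hrm)
  · -- divisible: ideal of endomorphisms with range in r • M
    set J : TwoSidedIdeal (Module.End R M) := TwoSidedIdeal.mk'
      {α : Module.End R M | ∀ m, ∃ x, r • x = α m}
      (by intro m; exact ⟨0, by simp⟩)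
      (by intro a b ha hb m
          obtain ⟨x, hx⟩ := ha m
          obtain ⟨y, hy⟩ := hb m
          exact ⟨x + y, by simp [smul_add, hx, hy]⟩)
      (by intro a ha m
          obtain ⟨x, hx⟩ := ha m
          exact ⟨-x, by simp [hx]⟩)
      (by intro a b hb m
          obtain ⟨x, hx⟩ := hb m
          exact ⟨a x, by show r • a x = a (b m); rw [← map_smul, hx]⟩)
      (by intro a b ha m
          obtain ⟨x, hx⟩ := ha (b m)
          exact ⟨x, hx⟩) with hJ
    have hJmem : ∀ α : Module.End R M,
        α ∈ J ↔ ∀ m, ∃ x, r • x = α m := fun α =>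
      TwoSidedIdeal.mem_mk' _ _ _ _ _ _ α
    have hJclosed : @IsClosed _ (moduleEndFinTop R M) (J : Set (Module.End R M)) := by
      have : (J : Set (Module.End R M))
          = {α : Module.End R M | ∀ m, α m ∈ {y : M | ∃ x, r • x = y}} := by
        ext α
        simp only [SetLike.mem_coe, hJmem, Set.mem_setOf_eq]
      rw [this]
      exact finTop_closed_of_pointwise _
    have hρJ : ρ ∈ J := by
      rw [hJmem]
      intro m
      exact ⟨m, by simp [hρ]⟩
    rcases hws.2 J hJclosed with h | h
    · exact absurd (by rw [h] at hρJ; simpa using hρJ) hρne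
    · intro m
      have h1 : (1 : Module.End R M) ∈ J := h ▸ TwoSidedIdeal.mem_top _
      obtain ⟨x, hx⟩ := (hJmem 1).1 h1 m
      exact ⟨x, hx⟩
end
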